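/- arXiv:1911.04105 — 7 statements merged into one kernel-verified Lean document; each statement's English description precedes it below -/
import Mathlib

section
/- For 1 ≤ p < N and any u ∈ C_c^∞(ℝ^N), the Hardy inequality holds: ((N-p)/p)^p · ∫_{ℝ^N} |u(x)|^p / |x|^p dx ≤ ∫_{ℝ^N} |∇u(x)|^p dx. -/
open MeasureTheory Real

section HardyAux

open Set Metric ENNReal

noncomputable abbrev HardyEN (N : ℕ) := EuclideanSpace ℝ (Fin N)

lemma hardy_const_int (N : ℕ) (p : ℝ) (hp : 0 < p) (hpN : p < N) :
    ∫⁻ t in Ioi (1:ℝ), ENNReal.ofReal (t ^ (-(N:ℝ)/p)) = ENNReal.ofReal (p/(N-p)) := by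
  have ha : -(N:ℝ)/p < -1 := by
    rw [div_lt_iff₀ hp]; nlinarith
  rw [← ofReal_integral_eq_lintegral_ofReal (integrableOn_Ioi_rpow_of_lt ha one_pos)
    ((ae_restrict_mem measurableSet_Ioi).mono fun t ht =>
      rpow_nonneg (le_of_lt (lt_trans one_pos ht)) _)]
  rw [integral_Ioi_rpow_of_lt ha one_pos]
  congr 1
  rw [Real.one_rpow]
  have hpn : p - (N:ℝ) ≠ 0 := by linarith
  field_simp
  rw [show (-(N:ℝ)+p) = -(N-p) by ring, div_neg_eq_neg_div, neg_neg]

lemma hardy_ball_fin (N : ℕ) (hN : 2 ≤ N) (p R : ℝ) (hp : 0 < p) (hpN : p < N) :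
    ∫⁻ x : HardyEN N in closedBall 0 R, ENNReal.ofReal (‖x‖ ^ (-p)) < ∞ := by
  have hmble : AEMeasurable (fun x : HardyEN N => ‖x‖ ^ (-p))
      (volume.restrict (closedBall (0 : HardyEN N) R)) := by
    have : Measurable fun x : HardyEN N => ‖x‖ ^ (-p) := by
      have := (measurable_norm (α := HardyEN N)); fun_prop
    exact this.aemeasurable
  rw [lintegral_eq_lintegral_meas_le _ (ae_of_all _ fun x => rpow_nonneg (norm_nonneg x) _) hmble]
  have hsub : ∀ t : ℝ, 0 < t →
      {a : HardyEN N | t ≤ ‖a‖ ^ (-p)} ⊆ closedBall 0 (t ^ (-p)⁻¹) := by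
    intro t ht a ha
    simp only [mem_setOf_eq] at ha
    rcases eq_or_ne a 0 with rfl | h0
    · exfalso
      rw [norm_zero, Real.zero_rpow (neg_ne_zero.2 hp.ne')] at ha; linarith
    · have hna : 0 < ‖a‖ := norm_pos_iff.2 h0
      rw [mem_closedBall_zero_iff]
      exact (Real.le_rpow_inv_iff_of_neg hna ht (by linarith)).2 ha
  calc ∫⁻ t in Ioi (0:ℝ), volume.restrict (closedBall (0:HardyEN N) R) {a | t ≤ ‖a‖ ^ (-p)}
      ≤ ∫⁻ t in Ioc (0:ℝ) 1 ∪ Ioi 1,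
          volume.restrict (closedBall (0:HardyEN N) R) {a | t ≤ ‖a‖ ^ (-p)} :=
        lintegral_mono_set Ioi_subset_Ioc_union_Ioi
    _ ≤ (∫⁻ t in Ioc (0:ℝ) 1, volume.restrict (closedBall (0:HardyEN N) R) {a | t ≤ ‖a‖ ^ (-p)})
        + ∫⁻ t in Ioi 1, volume.restrict (closedBall (0:HardyEN N) R) {a | t ≤ ‖a‖ ^ (-p)} :=
        lintegral_union_le _ _ _
    _ < ∞ := by
        refine ENNReal.add_lt_top.2 ⟨?_, ?_⟩
        · calc ∫⁻ t in Ioc (0:ℝ) 1,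
                volume.restrict (closedBall (0:HardyEN N) R) {a | t ≤ ‖a‖ ^ (-p)}
              ≤ ∫⁻ _ in Ioc (0:ℝ) 1, volume (closedBall (0:HardyEN N) R) :=
              lintegral_mono fun t => le_trans (measure_mono (subset_univ _))
                (le_of_eq (Measure.restrict_apply_univ _))
            _ = volume (closedBall (0:HardyEN N) R) * volume (Ioc (0:ℝ) 1) := setLIntegral_const _ _
            _ < ∞ := by
              refine ENNReal.mul_lt_top measure_closedBall_lt_top ?_
              simp [Real.volume_Ioc]
        · have hb : ∀ t ∈ Ioi (1:ℝ),
              volume.restrict (closedBall (0:HardyEN N) R) {a : HardyEN N | t ≤ ‖a‖ ^ (-p)} ≤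
              ENNReal.ofReal (t ^ (-(N:ℝ)/p)) * volume (ball (0:HardyEN N) 1) := by
            intro t ht
            have ht0 : (0:ℝ) < t := lt_trans one_pos ht
            calc volume.restrict (closedBall (0:HardyEN N) R) {a : HardyEN N | t ≤ ‖a‖ ^ (-p)}
                ≤ volume {a : HardyEN N | t ≤ ‖a‖ ^ (-p)} := Measure.restrict_apply_le _ _
              _ ≤ volume (closedBall (0:HardyEN N) (t ^ (-p)⁻¹)) := measure_mono (hsub t ht0)
              _ = ENNReal.ofReal ((t ^ (-p)⁻¹) ^ (Module.finrank ℝ (HardyEN N))) *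
                    volume (ball (0:HardyEN N) 1) :=
                  Measure.addHaar_closedBall _ _ (rpow_nonneg ht0.le _)
              _ = ENNReal.ofReal (t ^ (-(N:ℝ)/p)) * volume (ball (0:HardyEN N) 1) := by
                  congr 2
                  rw [← Real.rpow_natCast (t ^ (-p)⁻¹), ← Real.rpow_mul ht0.le]
                  congr 1
                  simp only [finrank_euclideanSpace, Fintype.card_fin]
                  rw [inv_neg, neg_mul, neg_div]
                  congr 1
                  rw [inv_mul_eq_div]
          calc ∫⁻ t in Ioi (1:ℝ),
                volume.restrict (closedBall (0:HardyEN N) R) {a | t ≤ ‖a‖ ^ (-p)}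
              ≤ ∫⁻ t in Ioi (1:ℝ),
                  ENNReal.ofReal (t ^ (-(N:ℝ)/p)) * volume (ball (0:HardyEN N) 1) :=
              setLIntegral_mono' measurableSet_Ioi hb
            _ = ENNReal.ofReal (p/(N-p)) * volume (ball (0:HardyEN N) 1) := by
              rw [lintegral_mul_const' _ _ measure_ball_lt_top.ne, hardy_const_int N p hp hpN]
            _ < ∞ := ENNReal.mul_lt_top ENNReal.ofReal_lt_top measure_ball_lt_top

lemma hardy_ray (N : ℕ) (u : HardyEN N → ℝ) (hu : ContDiff ℝ (⊤ : ℕ∞) u)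
    (hsupp : HasCompactSupport u) (x : HardyEN N) (hx : x ≠ 0) :
    ENNReal.ofReal (|u x| / ‖x‖) ≤
      ∫⁻ t in Ioi (1:ℝ), ENNReal.ofReal (‖fderiv ℝ u (t • x)‖) := by
  obtain ⟨R, hR⟩ := hsupp.isBounded.subset_closedBall 0
  have hxpos : 0 < ‖x‖ := norm_pos_iff.2 hx
  set T : ℝ := max 2 ((R + 1) / ‖x‖) with hT
  have hT1 : (1:ℝ) ≤ T := le_trans one_le_two (le_max_left _ _)
  have huT : u (T • x) = 0 := by
    apply image_eq_zero_of_notMem_tsupport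
    intro hmem
    have h1 : ‖T • x‖ ≤ R := mem_closedBall_zero_iff.1 (hR hmem)
    have h2 : (R + 1) / ‖x‖ ≤ T := le_max_right _ _
    rw [norm_smul, Real.norm_eq_abs, abs_of_pos (by positivity)] at h1
    have : R + 1 ≤ T * ‖x‖ := by
      rw [div_le_iff₀ hxpos] at h2; linarith
    linarith
  set D : ℝ → ℝ := fun t => (fderiv ℝ u (t • x)) x with hD
  have hDeriv : ∀ t : ℝ, HasDerivAt (fun s : ℝ => u (s • x)) (D t) t := by
    intro t
    have h1 : HasDerivAt (fun s : ℝ => s • x) ((1:ℝ) • x) t := (hasDerivAt_id t).smul_const x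
    rw [one_smul] at h1
    exact ((hu.differentiable (by simp) (t • x)).hasFDerivAt).comp_hasDerivAt t h1
  have hfcont : Continuous (fderiv ℝ u) := hu.continuous_fderiv (by simp)
  have hDcont : Continuous D :=
    (hfcont.comp ((continuous_id.smul continuous_const))).clm_apply continuous_const
  have hInt : IntervalIntegrable D volume 1 T := hDcont.intervalIntegrable _ _
  have hFTC : ∫ t in (1:ℝ)..T, D t = u (T • x) - u ((1:ℝ) • x) :=
    intervalIntegral.integral_eq_sub_of_hasDerivAt (fun t _ => hDeriv t) hInt
  have hux : u x = -∫ t in (1:ℝ)..T, D t := by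
    rw [hFTC, huT, one_smul]; ring
  set g : HardyEN N → ℝ := fun y => ‖fderiv ℝ u y‖ with hg
  have hgcont : Continuous fun t : ℝ => g (t • x) :=
    (hfcont.comp (continuous_id.smul continuous_const)).norm
  have hbound : |u x| ≤ (∫ t in (1:ℝ)..T, g (t • x)) * ‖x‖ := by
    rw [hux, abs_neg]
    calc |∫ t in (1:ℝ)..T, D t| ≤ ∫ t in (1:ℝ)..T, |D t| :=
          intervalIntegral.abs_integral_le_integral_abs hT1
      _ ≤ ∫ t in (1:ℝ)..T, g (t • x) * ‖x‖ := by
          apply intervalIntegral.integral_mono_on hT1 (hDcont.abs.intervalIntegrable _ _)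
            ((hgcont.mul continuous_const).intervalIntegrable _ _)
          intro t _
          exact (fderiv ℝ u (t • x)).le_opNorm x
      _ = (∫ t in (1:ℝ)..T, g (t • x)) * ‖x‖ := by
          rw [intervalIntegral.integral_mul_const]
  have hdiv : |u x| / ‖x‖ ≤ ∫ t in (1:ℝ)..T, g (t • x) := by
    rw [div_le_iff₀ hxpos]; exact hbound
  calc ENNReal.ofReal (|u x| / ‖x‖) ≤ ENNReal.ofReal (∫ t in (1:ℝ)..T, g (t • x)) :=
        ENNReal.ofReal_le_ofReal hdiv
    _ = ∫⁻ t in Ioc (1:ℝ) T, ENNReal.ofReal (g (t • x)) := by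
        rw [intervalIntegral.integral_of_le hT1,
          ofReal_integral_eq_lintegral_ofReal
            (hgcont.integrableOn_Ioc)
            (ae_of_all _ fun t => norm_nonneg _)]
    _ ≤ ∫⁻ t in Ioi (1:ℝ), ENNReal.ofReal (g (t • x)) :=
        lintegral_mono_set Ioc_subset_Ioi_self

lemma hardy_scaling (N : ℕ) (h : HardyEN N → ℝ≥0∞) (hm : Measurable h) (t : ℝ) (ht : 0 < t) :
    ∫⁻ x : HardyEN N, h (t • x) = ENNReal.ofReal ((t ^ N)⁻¹) * ∫⁻ y, h y := by
  rw [← lintegral_map hm (measurable_const_smul t), Measure.map_addHaar_smul volume ht.ne',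
    lintegral_smul_measure]
  congr 2
  rw [abs_of_nonneg (by positivity)]
  simp

lemma hardy_key (N : ℕ) (hN : 2 ≤ N) (p : ℝ) (hp : 1 ≤ p) (hpN : p < N)
    (u : HardyEN N → ℝ) (hu : ContDiff ℝ (⊤ : ℕ∞) u) (hsupp : HasCompactSupport u) :
    ∫⁻ x : HardyEN N, ENNReal.ofReal (|u x| / ‖x‖) ^ p ≤
      ENNReal.ofReal ((p/((N:ℝ)-p)) ^ p) *
        ∫⁻ x : HardyEN N, ENNReal.ofReal (‖fderiv ℝ u x‖) ^ p := by
  have hp0 : 0 < p := lt_of_lt_of_le one_pos hp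
  have hNp : 0 < (N:ℝ) - p := by linarith
  have ntf : Nontrivial (Fin N) := ⟨⟨0, by omega⟩, ⟨1, by omega⟩, by simp [Fin.ext_iff]⟩
  set g : HardyEN N → ℝ := fun y => ‖fderiv ℝ u y‖ with hgdef
  have hgc : Continuous g := (hu.continuous_fderiv (by simp)).norm
  set F : HardyEN N → ℝ≥0∞ := fun x => ENNReal.ofReal (|u x| / ‖x‖) with hFdef
  have hFm : Measurable F :=
    ((hu.continuous.abs.measurable).div measurable_norm).ennreal_ofReal
  set A := ∫⁻ x : HardyEN N, F x ^ p with hAdef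
  set B := ∫⁻ x : HardyEN N, ENNReal.ofReal (g x) ^ p with hBdef
  have hBmeas : Measurable fun x : HardyEN N => ENNReal.ofReal (g x) ^ p := by
    have := hgc.measurable; fun_prop
  show A ≤ ENNReal.ofReal ((p/((N:ℝ)-p)) ^ p) * B
  have hKpos : (0:ℝ) < (p/((N:ℝ)-p)) ^ p := by positivity
  by_cases hBtop : B = ∞
  · rw [hBtop, ENNReal.mul_top (by simp [ENNReal.ofReal_eq_zero, not_le, hKpos])]
    exact le_top
  -- Finiteness of A
  obtain ⟨R, hR⟩ := hsupp.isBounded.subset_closedBall 0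
  obtain ⟨C, hC⟩ := hsupp.exists_bound_of_continuous hu.continuous
  have hC0 : 0 ≤ C := le_trans (norm_nonneg (u 0)) (hC 0)
  have hpt : ∀ x : HardyEN N, F x ^ p ≤ (Metric.closedBall (0:HardyEN N) R).indicator
      (fun x => ENNReal.ofReal (C ^ p) * ENNReal.ofReal (‖x‖ ^ (-p))) x := by
    intro x
    by_cases hxball : x ∈ Metric.closedBall (0:HardyEN N) R
    · rw [Set.indicator_of_mem hxball]
      rcases eq_or_ne x 0 with rfl | hx0
      · have h0 : F (0 : HardyEN N) = 0 := by simp [hFdef]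
        rw [h0, ENNReal.zero_rpow_of_pos hp0]; exact zero_le
      · have hxn : 0 < ‖x‖ := norm_pos_iff.2 hx0
        rw [hFdef]
        simp only
        rw [ENNReal.ofReal_rpow_of_nonneg (div_nonneg (abs_nonneg _) (norm_nonneg _)) hp0.le]
        rw [Real.div_rpow (abs_nonneg _) (norm_nonneg _)]
        rw [← ENNReal.ofReal_mul (by positivity)]
        apply ENNReal.ofReal_le_ofReal
        rw [div_eq_mul_inv, ← Real.rpow_neg (norm_nonneg _)]
        refine mul_le_mul_of_nonneg_right ?_ (rpow_nonneg (norm_nonneg x) _)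
        refine Real.rpow_le_rpow (abs_nonneg _) ?_ hp0.le
        simpa using hC x
    · rw [Set.indicator_of_notMem hxball]
      have hx0 : u x = 0 := image_eq_zero_of_notMem_tsupport (fun hmem => hxball (hR hmem))
      simp [hFdef, hx0, ENNReal.zero_rpow_of_pos hp0]
  have hAfin : A < ∞ := by
    calc A ≤ ∫⁻ x : HardyEN N, (Metric.closedBall (0:HardyEN N) R).indicator
          (fun x => ENNReal.ofReal (C ^ p) * ENNReal.ofReal (‖x‖ ^ (-p))) x :=
        lintegral_mono hpt
      _ = ∫⁻ x : HardyEN N in Metric.closedBall (0:HardyEN N) R,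
            ENNReal.ofReal (C ^ p) * ENNReal.ofReal (‖x‖ ^ (-p)) :=
        lintegral_indicator measurableSet_closedBall _
      _ = ENNReal.ofReal (C ^ p) *
            ∫⁻ x : HardyEN N in Metric.closedBall (0:HardyEN N) R,
              ENNReal.ofReal (‖x‖ ^ (-p)) :=
        lintegral_const_mul' _ _ ENNReal.ofReal_ne_top
      _ < ∞ := ENNReal.mul_lt_top ENNReal.ofReal_lt_top (hardy_ball_fin N hN p R hp0 hpN)
  -- a.e. pointwise bound by ray integrals
  set G : HardyEN N → ℝ≥0∞ := fun x => ∫⁻ t in Ioi (1:ℝ), ENNReal.ofReal (g (t • x)) with hGdef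
  have hFG : ∀ᵐ x ∂(volume : Measure (HardyEN N)), F x ≤ G x := by
    have h0 : (volume : Measure (HardyEN N)) {0} = 0 := measure_singleton 0
    rw [ae_iff]
    refine measure_mono_null ?_ h0
    intro x hx
    simp only [Set.mem_setOf_eq, not_le] at hx
    simp only [Set.mem_singleton_iff]
    by_contra h0x
    exact absurd (hardy_ray N u hu hsupp x h0x) (not_le.2 hx)
  have step1 : A ≤ ∫⁻ x : HardyEN N, G x * F x ^ (p - 1) := by
    rw [hAdef]
    refine lintegral_mono_ae (hFG.mono fun x hx => ?_)
    rcases eq_or_ne (F x) 0 with hF0 | hF0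
    · rw [hF0, ENNReal.zero_rpow_of_pos hp0]; exact zero_le
    · have hsplit : F x ^ p = F x * F x ^ (p - 1) := by
        conv_lhs => rw [show p = 1 + (p-1) by ring]
        rw [ENNReal.rpow_add _ _ hF0 ENNReal.ofReal_ne_top, ENNReal.rpow_one]
      rw [hsplit]
      exact mul_le_mul_left hx _
  have hFp1_ne_top : ∀ x : HardyEN N, F x ^ (p - 1) ≠ ∞ := fun x =>
    ENNReal.rpow_ne_top_of_nonneg (by linarith) ENNReal.ofReal_ne_top
  have step2 : ∫⁻ x : HardyEN N, G x * F x ^ (p - 1)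
      = ∫⁻ t in Ioi (1:ℝ), ∫⁻ x : HardyEN N,
          ENNReal.ofReal (g (t • x)) * F x ^ (p - 1) := by
    have h1 : ∀ x : HardyEN N, G x * F x ^ (p - 1)
        = ∫⁻ t in Ioi (1:ℝ), ENNReal.ofReal (g (t • x)) * F x ^ (p - 1) := fun x =>
      (lintegral_mul_const' _ _ (hFp1_ne_top x)).symm
    simp_rw [h1]
    have m1 : Measurable fun q : HardyEN N × ℝ => g (q.2 • q.1) :=
      (hgc.comp (continuous_snd.smul continuous_fst)).measurable
    have m2 : Measurable fun q : HardyEN N × ℝ => F q.1 ^ (p - 1) := by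
      have := hFm; fun_prop
    exact lintegral_lintegral_swap ((m1.ennreal_ofReal.mul m2).aemeasurable)
  have hscale : ∀ t : ℝ, 0 < t →
      ∫⁻ x : HardyEN N, ENNReal.ofReal (g (t • x)) ^ p = ENNReal.ofReal ((t ^ N)⁻¹) * B :=
    fun t ht => hardy_scaling N _ hBmeas t ht
  have hq1 : 1 - 1/p ≥ 0 := by
    have : 1/p ≤ 1 := by rw [div_le_one hp0]; exact hp
    linarith
  have holder : ∀ t ∈ Ioi (1:ℝ),
      ∫⁻ x : HardyEN N, ENNReal.ofReal (g (t • x)) * F x ^ (p - 1)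
        ≤ ENNReal.ofReal (t ^ (-(N:ℝ)/p)) * (B ^ (1/p) * A ^ (1 - 1/p)) := by
    intro t ht
    have ht0 : (0:ℝ) < t := lt_trans one_pos ht
    have hexp : ENNReal.ofReal ((t ^ N)⁻¹) ^ (1/p) = ENNReal.ofReal (t ^ (-(N:ℝ)/p)) := by
      rw [ENNReal.ofReal_rpow_of_nonneg (by positivity) (by positivity)]
      congr 1
      rw [show -(N:ℝ)/p = (-(N:ℝ)) * (1/p) by ring, Real.rpow_mul ht0.le,
        Real.rpow_neg ht0.le, Real.rpow_natCast]
    have hgm : Measurable fun x : HardyEN N => ENNReal.ofReal (g (t • x)) :=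
      ((hgc.comp (continuous_const_smul t)).measurable).ennreal_ofReal
    rcases eq_or_lt_of_le hp with hp1 | hp1
    · -- p = 1
      subst hp1
      have hs := hscale t ht0
      simp only [ENNReal.rpow_one] at hs
      simp only [sub_self, ENNReal.rpow_zero, mul_one, div_one, ENNReal.rpow_one]
      rw [hs, show ((t:ℝ)^N)⁻¹ = t ^ (-(N:ℝ)) by
        rw [Real.rpow_neg ht0.le, Real.rpow_natCast]]
    · -- 1 < p
      have hpq := Real.HolderConjugate.conjExponent hp1
      set q := p/(p-1) with hqdef
      have hq : 1/q = 1 - 1/p := by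
        rw [hqdef, one_div_div, sub_div, div_self hp0.ne']
      have hp1ne : p - 1 ≠ 0 := by linarith
      calc ∫⁻ x : HardyEN N, ENNReal.ofReal (g (t • x)) * F x ^ (p - 1)
          ≤ (∫⁻ x : HardyEN N, ENNReal.ofReal (g (t • x)) ^ p) ^ (1/p) *
            (∫⁻ x : HardyEN N, (F x ^ (p - 1)) ^ q) ^ (1/q) :=
            ENNReal.lintegral_mul_le_Lp_mul_Lq volume hpq hgm.aemeasurable
              (by have := hFm; fun_prop)
        _ = (ENNReal.ofReal ((t ^ N)⁻¹) * B) ^ (1/p) * A ^ (1 - 1/p) := by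
            rw [hscale t ht0, hq]
            congr 2
            refine lintegral_congr fun x => ?_
            rw [← ENNReal.rpow_mul]
            congr 1
            rw [hqdef]
            field_simp
        _ = ENNReal.ofReal (t ^ (-(N:ℝ)/p)) * (B ^ (1/p) * A ^ (1 - 1/p)) := by
            rw [ENNReal.mul_rpow_of_nonneg _ _ (by positivity), hexp, mul_assoc]
  have hfin_ne : B ^ (1/p) * A ^ (1 - 1/p) ≠ ∞ :=
    ENNReal.mul_ne_top (ENNReal.rpow_ne_top_of_nonneg (by positivity) hBtop)
      (ENNReal.rpow_ne_top_of_nonneg hq1 hAfin.ne)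
  have chain : A ≤ ENNReal.ofReal (p/((N:ℝ)-p)) * (B ^ (1/p) * A ^ (1 - 1/p)) := by
    calc A ≤ ∫⁻ x : HardyEN N, G x * F x ^ (p - 1) := step1
      _ = ∫⁻ t in Ioi (1:ℝ), ∫⁻ x : HardyEN N,
            ENNReal.ofReal (g (t • x)) * F x ^ (p - 1) := step2
      _ ≤ ∫⁻ t in Ioi (1:ℝ),
            ENNReal.ofReal (t ^ (-(N:ℝ)/p)) * (B ^ (1/p) * A ^ (1 - 1/p)) :=
          setLIntegral_mono' measurableSet_Ioi holder
      _ = (∫⁻ t in Ioi (1:ℝ), ENNReal.ofReal (t ^ (-(N:ℝ)/p))) *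
            (B ^ (1/p) * A ^ (1 - 1/p)) :=
          lintegral_mul_const' _ _ hfin_ne
      _ = ENNReal.ofReal (p/((N:ℝ)-p)) * (B ^ (1/p) * A ^ (1 - 1/p)) := by
          rw [hardy_const_int N p hp0 hpN]
  rcases eq_or_ne A 0 with hA0 | hA0
  · rw [hA0]; exact zero_le
  · have hAne : A ≠ ∞ := hAfin.ne
    have hc0 : A ^ (1 - 1/p) ≠ 0 := by
      simp only [ne_eq, ENNReal.rpow_eq_zero_iff, not_or, not_and, not_lt]
      exact ⟨fun h => absurd h hA0, fun h => absurd h hAne⟩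
    have hct : A ^ (1 - 1/p) ≠ ∞ := ENNReal.rpow_ne_top_of_nonneg hq1 hAne
    have h2 : A ^ (1/p) ≤ ENNReal.ofReal (p/((N:ℝ)-p)) * B ^ (1/p) := by
      refine (ENNReal.mul_le_mul_iff_left hc0 hct).1 ?_
      calc A ^ (1/p) * A ^ (1 - 1/p) = A := by
            rw [← ENNReal.rpow_add _ _ hA0 hAne, show 1/p + (1 - 1/p) = 1 by ring,
              ENNReal.rpow_one]
        _ ≤ ENNReal.ofReal (p/((N:ℝ)-p)) * (B ^ (1/p) * A ^ (1 - 1/p)) := chain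
        _ = ENNReal.ofReal (p/((N:ℝ)-p)) * B ^ (1/p) * A ^ (1 - 1/p) := by rw [mul_assoc]
    have h3 := ENNReal.rpow_le_rpow h2 hp0.le
    rw [← ENNReal.rpow_mul, one_div_mul_cancel hp0.ne', ENNReal.rpow_one] at h3
    rw [ENNReal.mul_rpow_of_nonneg _ _ hp0.le, ← ENNReal.rpow_mul,
      one_div_mul_cancel hp0.ne', ENNReal.rpow_one,
      ENNReal.ofReal_rpow_of_nonneg (div_nonneg hp0.le hNp.le) hp0.le] at h3
    exact h3

end HardyAux

theorem hardy_inequality (N : ℕ) (hN : 2 ≤ N) (p : ℝ) (hp : 1 ≤ p) (hpN : p < N)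
    (u : EuclideanSpace ℝ (Fin N) → ℝ) (hu : ContDiff ℝ (⊤ : ℕ∞) u) (hsupp : HasCompactSupport u) :
    (((N : ℝ) - p) / p) ^ p * ∫ x : EuclideanSpace ℝ (Fin N), |u x| ^ p / ‖x‖ ^ p
      ≤ ∫ x : EuclideanSpace ℝ (Fin N), ‖fderiv ℝ u x‖ ^ p := by
  have hp0 : 0 < p := lt_of_lt_of_le one_pos hp
  have hNp : 0 < (N:ℝ) - p := by linarith
  have ntf : Nontrivial (Fin N) := ⟨⟨0, by omega⟩, ⟨1, by omega⟩, by simp [Fin.ext_iff]⟩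
  set g : EuclideanSpace ℝ (Fin N) → ℝ := fun y => ‖fderiv ℝ u y‖ with hgdef
  have hgc : Continuous g := (hu.continuous_fderiv (by simp)).norm
  set A := ∫⁻ x : EuclideanSpace ℝ (Fin N), ENNReal.ofReal (|u x| / ‖x‖) ^ p with hAdef
  set B := ∫⁻ x : EuclideanSpace ℝ (Fin N), ENNReal.ofReal (g x) ^ p with hBdef
  -- B is finite
  have hgp_cont : Continuous fun x : EuclideanSpace ℝ (Fin N) => g x ^ p :=
    hgc.rpow_const (fun x => Or.inr hp0.le)
  have hgp_supp : HasCompactSupport fun x : EuclideanSpace ℝ (Fin N) => g x ^ p :=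
    (hsupp.fderiv (𝕜 := ℝ)).norm.comp_left (g := (· ^ p)) (Real.zero_rpow hp0.ne')
  have hgp_int : Integrable (fun x : EuclideanSpace ℝ (Fin N) => g x ^ p) :=
    hgp_cont.integrable_of_hasCompactSupport hgp_supp
  have hB_eq : B = ∫⁻ x : EuclideanSpace ℝ (Fin N), ENNReal.ofReal (g x ^ p) := by
    refine lintegral_congr fun x => ?_
    rw [ENNReal.ofReal_rpow_of_nonneg (norm_nonneg _) hp0.le]
  have hBfin : B ≠ ⊤ := by
    rw [hB_eq, ← ofReal_integral_eq_lintegral_ofReal hgp_int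
      (ae_of_all _ fun x => rpow_nonneg (norm_nonneg _) _)]
    exact ENNReal.ofReal_ne_top
  -- identify the integrals
  have hRHS : ∫ x : EuclideanSpace ℝ (Fin N), g x ^ p = B.toReal := by
    rw [hB_eq, integral_eq_lintegral_of_nonneg_ae
      (ae_of_all _ fun x => rpow_nonneg (norm_nonneg _) _)
      ((hgp_cont.measurable).aestronglyMeasurable)]
  have hLHS : ∫ x : EuclideanSpace ℝ (Fin N), |u x| ^ p / ‖x‖ ^ p = A.toReal := by
    have hmeas : Measurable fun x : EuclideanSpace ℝ (Fin N) => |u x| ^ p / ‖x‖ ^ p := by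
      have h1 := hu.continuous.abs.measurable
      have h2 := measurable_norm (α := EuclideanSpace ℝ (Fin N))
      fun_prop
    rw [integral_eq_lintegral_of_nonneg_ae
      (ae_of_all _ fun x => div_nonneg (rpow_nonneg (abs_nonneg _) _)
        (rpow_nonneg (norm_nonneg _) _))
      hmeas.aestronglyMeasurable]
    congr 1
    have h0 : (volume : Measure (EuclideanSpace ℝ (Fin N))) {0} = 0 := measure_singleton 0
    refine lintegral_congr_ae ?_
    have : {x : EuclideanSpace ℝ (Fin N) |
        ¬ ENNReal.ofReal (|u x| ^ p / ‖x‖ ^ p) = ENNReal.ofReal (|u x| / ‖x‖) ^ p} ⊆ {0} := by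
      intro x hx
      simp only [Set.mem_setOf_eq] at hx
      simp only [Set.mem_singleton_iff]
      by_contra h0x
      apply hx
      rw [ENNReal.ofReal_rpow_of_nonneg (div_nonneg (abs_nonneg _) (norm_nonneg _)) hp0.le,
        Real.div_rpow (abs_nonneg _) (norm_nonneg _)]
    exact ae_iff.2 (measure_mono_null this h0)
  rw [hLHS, hRHS]
  -- use the key lemma
  have hkey := hardy_key N hN p hp hpN u hu hsupp
  rw [← hAdef, ← hBdef] at hkey
  have hAfin : A ≠ ⊤ := by
    intro hA
    rw [hA] at hkey
    have : ENNReal.ofReal ((p/((N:ℝ)-p)) ^ p) * B ≠ ⊤ :=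
      ENNReal.mul_ne_top ENNReal.ofReal_ne_top hBfin
    exact this (top_le_iff.1 hkey)
  have htoReal : A.toReal ≤ (p/((N:ℝ)-p)) ^ p * B.toReal := by
    have := ENNReal.toReal_mono (ENNReal.mul_ne_top ENNReal.ofReal_ne_top hBfin) hkey
    rwa [ENNReal.toReal_mul, ENNReal.toReal_ofReal (by positivity)] at this
  calc (((N:ℝ) - p) / p) ^ p * A.toReal
      ≤ (((N:ℝ) - p) / p) ^ p * ((p/((N:ℝ)-p)) ^ p * B.toReal) := by
        exact mul_le_mul_of_nonneg_left htoReal (rpow_nonneg (by positivity) _)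
    _ = B.toReal := by
        rw [← mul_assoc, ← Real.mul_rpow (by positivity) (by positivity),
          show ((N:ℝ) - p) / p * (p/((N:ℝ)-p)) = 1 by field_simp, Real.one_rpow, one_mul]
end

section
/- Let N ≥ 2, and for p < N let S_{N,p} = π^{p/2} N ((N-p)/(p-1))^{p-1} (Γ(N/p)Γ(N+1-N/p) / (Γ(N)Γ(1+N/2)))^{p/N} be the best Sobolev constant. Then S_{N,p} / (N-p)^{p-1} converges to a positive finite limit as p → N from below; in particular S_{N,p} ~ C(N)·(N-p)^{p-1} as p ↗ N. -/
/-!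
Since `(N - p) / (p - 1) ≥ 0` for `1 < p < N`, the power `((N - p) / (p - 1)) ^ (p - 1)` splits as
`(N - p) ^ (p - 1) * (p - 1) ^ (-(p - 1))`, so dividing `S_{N,p}` by `(N - p) ^ (p - 1)` leaves
`π ^ (p / 2) N (p - 1) ^ (-(p - 1)) R(p) ^ (p / N)`, with `R` the Gamma ratio. All Gamma arguments
stay positive near `p = N`, so this expression is continuous at `N`, and its value there,
`π ^ (N / 2) N (N - 1) ^ (1 - N) R(N)`, is the positive limit.
-/

open Real Filter Topology

theorem Real.continuousAt_Gamma_of_pos {x : ℝ} (hx : 0 < x) : ContinuousAt Gamma x :=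
  differentiableOn_Gamma_Ioi.continuousOn.continuousAt (Ioi_mem_nhds hx)

theorem Real.div_rpow_div_rpow_self {x y : ℝ} (hx : 0 < x) (hy : 0 ≤ y) (r : ℝ) :
    (x / y) ^ r / x ^ r = y⁻¹ ^ r := by
  rw [div_rpow hx.le hy, inv_rpow hy, div_div_cancel_left' (rpow_pos_of_pos hx r).ne']

noncomputable section

def sobolevGammaRatio (N p : ℝ) : ℝ :=
  Gamma (N / p) * Gamma (N + 1 - N / p) / (Gamma N * Gamma (1 + N / 2))

/-- `S_{N,p} / (N - p) ^ (p - 1)`, written so that it is continuous in `p` across `p = N`. -/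
def sobolevReducedConstant (N p : ℝ) : ℝ :=
  π ^ (p / 2) * N * (p - 1)⁻¹ ^ (p - 1) * sobolevGammaRatio N p ^ (p / N)

end

section

variable {N p : ℝ}

theorem sobolevGammaRatio_pos (hN : 0 < N) (hp : 0 < p) (hpN : N / p < N + 1) :
    0 < sobolevGammaRatio N p := by
  have : 0 < N + 1 - N / p := by linarith
  unfold sobolevGammaRatio
  positivity

theorem continuousAt_sobolevGammaRatio (hN : 0 < N) (hp : 0 < p) (hpN : N / p < N + 1) :
    ContinuousAt (sobolevGammaRatio N) p := by
  have hdiv : ContinuousAt (fun q => N / q) p := continuousAt_const.div continuousAt_id hp.ne'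
  have hΓ₁ := (continuousAt_Gamma_of_pos (div_pos hN hp)).comp hdiv
  have hΓ₂ : ContinuousAt (fun q => Gamma (N + 1 - N / q)) p :=
    (continuousAt_Gamma_of_pos (x := N + 1 - N / p) (by linarith)).comp
      (f := fun q => N + 1 - N / q) (continuousAt_const.sub hdiv)
  exact (hΓ₁.mul hΓ₂).div continuousAt_const (by positivity)

theorem sobolevReducedConstant_pos (hN : 0 < N) (hp : 1 < p) (hpN : N / p < N + 1) :
    0 < sobolevReducedConstant N p := by
  have hR := sobolevGammaRatio_pos hN (by linarith) hpN
  have : 0 < (p - 1)⁻¹ := inv_pos.mpr (by linarith)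
  unfold sobolevReducedConstant
  positivity

theorem continuousAt_sobolevReducedConstant (hN : 0 < N) (hp : 1 < p) (hpN : N / p < N + 1) :
    ContinuousAt (sobolevReducedConstant N) p := by
  have hπ : ContinuousAt (fun q : ℝ => π ^ (q / 2)) p :=
    continuousAt_const.rpow (continuousAt_id.div_const 2) (Or.inl pi_ne_zero)
  have hbase : ContinuousAt (fun q : ℝ => (q - 1)⁻¹ ^ (q - 1)) p :=
    ((continuousAt_id.sub continuousAt_const).inv₀ (by simp; linarith)).rpow
      (continuousAt_id.sub continuousAt_const) (Or.inl (by simp; linarith))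
  have hR : ContinuousAt (fun q => sobolevGammaRatio N q ^ (q / N)) p :=
    (continuousAt_sobolevGammaRatio hN (by linarith) hpN).rpow
      (continuousAt_id.div_const N) (Or.inl (sobolevGammaRatio_pos hN (by linarith) hpN).ne')
  exact ((hπ.mul continuousAt_const).mul hbase).mul hR

theorem sobolev_constant_div_eq_sobolevReducedConstant (hp : 1 < p) (hpN : p < N) :
    π ^ (p / 2) * N * ((N - p) / (p - 1)) ^ (p - 1) * sobolevGammaRatio N p ^ (p / N) /
      (N - p) ^ (p - 1) = sobolevReducedConstant N p := by
  rw [sobolevReducedConstant,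
    ← div_rpow_div_rpow_self (sub_pos.mpr hpN) (sub_pos.mpr hp).le (p - 1)]
  ring

end

theorem sobolev_constant_decay (N : ℕ) (hN : 2 ≤ N) :
    ∃ C : ℝ, 0 < C ∧
      Tendsto
        (fun p : ℝ =>
          (π ^ (p / 2) * N * (((N : ℝ) - p) / (p - 1)) ^ (p - 1) *
              ((Real.Gamma ((N : ℝ) / p) * Real.Gamma ((N : ℝ) + 1 - (N : ℝ) / p)) /
                  (Real.Gamma (N : ℝ) * Real.Gamma (1 + (N : ℝ) / 2))) ^ (p / (N : ℝ))) /
            ((N : ℝ) - p) ^ (p - 1))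
        (nhdsWithin (N : ℝ) (Set.Iio (N : ℝ))) (nhds C) := by
  have hN1 : (1 : ℝ) < N := by exact_mod_cast hN
  have hN0 : (0 : ℝ) < N := by linarith
  have hNN : (N : ℝ) / N < N + 1 := by rw [div_self hN0.ne']; linarith
  refine ⟨sobolevReducedConstant N N, sobolevReducedConstant_pos hN0 hN1 hNN, ?_⟩
  refine (continuousAt_sobolevReducedConstant hN0 hN1 hNN).continuousWithinAt.tendsto.congr' ?_
  filter_upwards [Ioo_mem_nhdsLT hN1] with p ⟨hp1, hpN⟩
  exact (sobolev_constant_div_eq_sobolevReducedConstant hp1 hpN).symm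
end

section
/- (Radial lemma) Let N ≥ 2 and let u ∈ C_c^1(ℝ^N) be a radial function supported in the ball B_ρ of radius ρ. Then for every x with 0 < |x| < ρ, |u(x)| ≤ ‖∇u‖_{L^N(ℝ^N)} · ω_{N-1}^{-1/N} · (log(ρ/|x|))^{(N-1)/N}, where ω_{N-1} is the surface area of the unit sphere in ℝ^N. -/
/-! Write `r = ‖x‖`. Since `u` is radial, its profile `v` is `C¹` on `(0, ∞)` with
`|v'(‖y‖)| ≤ ‖Du(y)‖`, and `v ρ = 0`, so `|u x| ≤ ∫_r^ρ |v'|`. Hölder's inequality with the weights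
`s ^ ((N - 1) / N)` and `s ^ (-(N - 1) / N)` bounds this by
`(∫_r^ρ s ^ (N - 1) |v'| ^ N) ^ (1 / N) · log (ρ / r) ^ ((N - 1) / N)`, and in polar coordinates
`ω_{N-1} ∫_r^ρ s ^ (N - 1) |v'| ^ N ≤ ∫ ‖Du‖ ^ N`, where `ω_{N-1} = N · vol (B₁)`. -/

open MeasureTheory Real Set Filter Topology Metric Module

theorem ContinuousOn.memLp_restrict_Icc {f : ℝ → ℝ} {a b : ℝ} (hf : ContinuousOn f (Icc a b))
    (p : ENNReal) : MemLp f p (volume.restrict (Icc a b)) := by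
  obtain ⟨C, hC⟩ := isCompact_Icc.exists_bound_of_continuousOn hf
  refine (memLp_top_of_bound (hf.aestronglyMeasurable measurableSet_Icc) C ?_).mono_exponent
    le_top
  filter_upwards [ae_restrict_mem measurableSet_Icc] with s hs using hC s hs

theorem integral_abs_le_weighted_integral_rpow_mul_log {f : ℝ → ℝ} {p r ρ : ℝ} (hp : 1 < p)
    (hr : 0 < r) (hrρ : r ≤ ρ) (hf : ContinuousOn f (Icc r ρ)) :
    ∫ s in Icc r ρ, |f s| ≤
      (∫ s in Icc r ρ, s ^ (p - 1) * |f s| ^ p) ^ (1 / p) * log (ρ / r) ^ ((p - 1) / p) := by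
  set q := p.conjExponent
  have hpq : p.HolderConjugate q := .conjExponent hp
  have hpos : ∀ s ∈ Icc r ρ, 0 < s := fun s hs => hr.trans_le hs.1
  set a := 1 / q
  have hexp : (p - 1) / p = a := by
    rw [sub_div, div_self hpq.ne_zero, one_div p, hpq.one_sub_inv, inv_eq_one_div]
  have hap : a * p = p - 1 := by
    rw [← hexp, div_mul_cancel₀ _ hpq.ne_zero]
  have hcont : ContinuousOn (fun s : ℝ => s ^ a) (Icc r ρ) :=
    continuousOn_id.rpow_const fun s hs => .inl (hpos s hs).ne'
  have hcont' : ContinuousOn (fun s : ℝ => s ^ (-a)) (Icc r ρ) :=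
    continuousOn_id.rpow_const fun s hs => .inl (hpos s hs).ne'
  -- Hölder for the splitting `|f s| = (|f s| * s ^ a) * s ^ (-a)`, with `(s ^ (-a)) ^ q = s⁻¹`
  have hholder := integral_mul_le_Lp_mul_Lq_of_nonneg hpq
    (f := fun s => |f s| * s ^ a) (g := fun s => s ^ (-a)) (μ := volume.restrict (Icc r ρ))
    (by filter_upwards [ae_restrict_mem measurableSet_Icc] with s hs
        exact mul_nonneg (abs_nonneg _) (rpow_nonneg (hpos s hs).le _))
    (by filter_upwards [ae_restrict_mem measurableSet_Icc] with s hs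
        exact rpow_nonneg (hpos s hs).le _)
    ((hf.abs.mul hcont).memLp_restrict_Icc _) (hcont'.memLp_restrict_Icc _)
  have hprod : ∫ s in Icc r ρ, |f s| * s ^ a * s ^ (-a) = ∫ s in Icc r ρ, |f s| :=
    setIntegral_congr_fun measurableSet_Icc fun s hs => by
      rw [mul_assoc, ← rpow_add (hpos s hs), add_neg_cancel, rpow_zero, mul_one]
  have hfp : ∫ s in Icc r ρ, (|f s| * s ^ a) ^ p = ∫ s in Icc r ρ, s ^ (p - 1) * |f s| ^ p :=
    setIntegral_congr_fun measurableSet_Icc fun s hs => by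
      rw [mul_rpow (abs_nonneg _) (rpow_nonneg (hpos s hs).le _), ← rpow_mul (hpos s hs).le, hap,
        mul_comm]
  have hgq : ∫ s in Icc r ρ, (s ^ (-a)) ^ q = log (ρ / r) := by
    rw [← integral_inv_of_pos hr (hr.trans_le hrρ), intervalIntegral.integral_of_le hrρ,
      ← integral_Icc_eq_integral_Ioc]
    refine setIntegral_congr_fun measurableSet_Icc fun s hs => ?_
    rw [← rpow_mul (hpos s hs).le, neg_mul, one_div_mul_cancel hpq.symm.ne_zero, rpow_neg_one]
  rw [hprod, hfp, hgq] at hholder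
  rwa [hexp]

theorem abs_sub_le_integral_abs_deriv {v : ℝ → ℝ} {r ρ : ℝ} (hrρ : r ≤ ρ)
    (hv : ∀ s ∈ Icc r ρ, DifferentiableAt ℝ v s) (hv' : ContinuousOn (deriv v) (Icc r ρ)) :
    |v ρ - v r| ≤ ∫ s in Icc r ρ, |deriv v s| := by
  rw [← intervalIntegral.integral_eq_sub_of_hasDerivAt
      (fun s hs => (hv s (uIcc_of_le hrρ ▸ hs)).hasDerivAt) (hv'.intervalIntegrable_of_Icc hrρ),
    integral_Icc_eq_integral_Ioc, ← intervalIntegral.integral_of_le hrρ]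
  exact intervalIntegral.abs_integral_le_integral_abs hrρ

section Radial

variable {E : Type*} [NormedAddCommGroup E] [NormedSpace ℝ E] {u : E → ℝ} {v : ℝ → ℝ}

theorem radial_eventuallyEq_comp_smul (hrad : ∀ x, u x = v ‖x‖) {e : E} (he : ‖e‖ = 1) {s : ℝ}
    (hs : 0 < s) : v =ᶠ[𝓝 s] fun t => u (t • e) := by
  filter_upwards [eventually_gt_nhds hs] with t ht
  rw [hrad, norm_smul, he, mul_one, norm_of_nonneg ht.le]

theorem hasDerivAt_of_radial (hrad : ∀ x, u x = v ‖x‖) {e : E} (he : ‖e‖ = 1) {s : ℝ}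
    (hs : 0 < s) (hu : DifferentiableAt ℝ u (s • e)) :
    HasDerivAt v (fderiv ℝ u (s • e) e) s := by
  have hline : HasDerivAt (fun t : ℝ => t • e) e s := by
    simpa using (hasDerivAt_id s).smul_const e
  exact (hu.hasFDerivAt.comp_hasDerivAt s hline).congr_of_eventuallyEq
    (radial_eventuallyEq_comp_smul hrad he hs)

theorem contDiffOn_of_radial [Nontrivial E] {n : WithTop ℕ∞} (hrad : ∀ x, u x = v ‖x‖)
    (hu : ContDiff ℝ n u) : ContDiffOn ℝ n v (Ioi 0) := by
  obtain ⟨e, he⟩ := exists_norm_eq E zero_le_one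
  intro s hs
  exact ((hu.comp (contDiff_id.smul contDiff_const)).contDiffAt.congr_of_eventuallyEq
    (radial_eventuallyEq_comp_smul hrad he hs)).contDiffWithinAt

theorem abs_deriv_of_radial_le (hrad : ∀ x, u x = v ‖x‖) {y : E} (hy : y ≠ 0)
    (hu : DifferentiableAt ℝ u y) : |deriv v ‖y‖| ≤ ‖fderiv ℝ u y‖ := by
  have hy' : 0 < ‖y‖ := norm_pos_iff.mpr hy
  have he : ‖‖y‖⁻¹ • y‖ = 1 := by rw [norm_smul, norm_inv, norm_norm, inv_mul_cancel₀ hy'.ne']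
  have hye : ‖y‖ • ‖y‖⁻¹ • y = y := by rw [smul_smul, mul_inv_cancel₀ hy'.ne', one_smul]
  have hderiv := hasDerivAt_of_radial hrad he hy' (hye.symm ▸ hu)
  rw [hye] at hderiv
  rw [hderiv.deriv, ← norm_eq_abs]
  simpa [he] using (fderiv ℝ u y).le_opNorm (‖y‖⁻¹ • y)

end Radial

theorem hasCompactSupport_of_radial {E : Type*} [NormedAddCommGroup E] [ProperSpace E]
    {u : E → ℝ} {v : ℝ → ℝ} (hrad : ∀ x, u x = v ‖x‖) {ρ : ℝ} (hsupp : ∀ r, ρ ≤ r → v r = 0) :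
    HasCompactSupport u :=
  .intro (isCompact_closedBall 0 ρ) fun y hy => by
    rw [hrad]; exact hsupp _ (not_le.mp (mt mem_closedBall_zero_iff.mpr hy)).le

theorem integrable_norm_fderiv_rpow {E : Type*} [NormedAddCommGroup E] [NormedSpace ℝ E]
    [MeasurableSpace E] [OpensMeasurableSpace E] {μ : Measure E} [IsFiniteMeasureOnCompacts μ]
    {u : E → ℝ} (hu : ContDiff ℝ 1 u) (hsupp : HasCompactSupport u) {p : ℝ} (hp : 0 < p) :
    Integrable (fun y => ‖fderiv ℝ u y‖ ^ p) μ := by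
  have hsupp' : HasCompactSupport fun y => ‖fderiv ℝ u y‖ ^ p :=
    hsupp.fderiv (𝕜 := ℝ) |>.comp_left (g := fun L => ‖L‖ ^ p) (by simp [zero_rpow hp.ne'])
  exact ((hu.continuous_fderiv one_ne_zero).norm.rpow_const fun _ => .inr hp.le)
    |>.integrable_of_hasCompactSupport hsupp'

theorem finrank_mul_measureReal_ball_mul_setIntegral_le {E : Type*} [NormedAddCommGroup E]
    [NormedSpace ℝ E] [FiniteDimensional ℝ E] [MeasurableSpace E] [BorelSpace E] [Nontrivial E]
    (μ : Measure E) [μ.IsAddHaarMeasure] {g : ℝ → ℝ} {F : E → ℝ}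
    (hg : Measurable g) (hg0 : ∀ s, 0 ≤ g s) (hF : Integrable F μ)
    (hgF : ∀ y, y ≠ 0 → g ‖y‖ ≤ F y) {r ρ : ℝ} (hr : 0 < r) :
    finrank ℝ E * μ.real (ball 0 1) * ∫ s in Icc r ρ, s ^ ((finrank ℝ E : ℝ) - 1) * g s ≤
      ∫ y, F y ∂μ := by
  have hgF' : ∀ᵐ y ∂μ, g ‖y‖ ≤ F y := by
    filter_upwards [compl_mem_ae_iff.mpr (measure_singleton (μ := μ) 0)] with y hy using hgF y hy
  have hint : IntegrableOn (fun s : ℝ => s ^ (finrank ℝ E - 1) * g s) (Ioi 0) := by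
    simpa using (integrable_fun_norm_addHaar μ (f := g)).mp <|
      hF.mono' (hg.comp measurable_norm).aestronglyMeasurable <| by
        filter_upwards [hgF'] with y hy
        rwa [norm_of_nonneg (hg0 _)]
  have hdim : (finrank ℝ E : ℝ) - 1 = (finrank ℝ E - 1 : ℕ) := (Nat.cast_pred finrank_pos).symm
  simp_rw [hdim, rpow_natCast]
  calc finrank ℝ E * μ.real (ball 0 1) * ∫ s in Icc r ρ, s ^ (finrank ℝ E - 1) * g s
      ≤ finrank ℝ E * μ.real (ball 0 1) * ∫ s in Ioi 0, s ^ (finrank ℝ E - 1) * g s := by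
        refine mul_le_mul_of_nonneg_left (setIntegral_mono_set hint ?_ ?_) (by positivity)
        · filter_upwards [ae_restrict_mem measurableSet_Ioi] with s hs
          exact mul_nonneg (pow_nonneg (le_of_lt hs) _) (hg0 s)
        · exact (show Icc r ρ ⊆ Ioi 0 from fun s hs => hr.trans_le hs.1).eventuallyLE
    _ = ∫ y, g ‖y‖ ∂μ := by
        rw [integral_fun_norm_addHaar μ g]
        simp only [nsmul_eq_mul, smul_eq_mul, mul_assoc]
    _ ≤ ∫ y, F y ∂μ := integral_mono_of_nonneg (.of_forall fun y => hg0 _) hF hgF'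

theorem finrank_mul_measureReal_ball_mul_setIntegral_deriv_rpow_le {E : Type*}
    [NormedAddCommGroup E] [NormedSpace ℝ E] [FiniteDimensional ℝ E] [MeasurableSpace E]
    [BorelSpace E] [Nontrivial E] (μ : Measure E) [μ.IsAddHaarMeasure] {u : E → ℝ} {v : ℝ → ℝ}
    (hrad : ∀ x, u x = v ‖x‖) (hu : ContDiff ℝ 1 u) (hsupp : HasCompactSupport u) {p : ℝ}
    (hp : 0 < p) {r ρ : ℝ} (hr : 0 < r) :
    finrank ℝ E * μ.real (ball 0 1) *
        ∫ s in Icc r ρ, s ^ ((finrank ℝ E : ℝ) - 1) * |deriv v s| ^ p ≤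
      ∫ y, ‖fderiv ℝ u y‖ ^ p ∂μ :=
  finrank_mul_measureReal_ball_mul_setIntegral_le μ ((measurable_deriv v).abs.pow_const _)
    (fun _ => rpow_nonneg (abs_nonneg _) _) (integrable_norm_fderiv_rpow hu hsupp hp)
    (fun y hy => rpow_le_rpow (abs_nonneg _)
      (abs_deriv_of_radial_le hrad hy (hu.differentiable one_ne_zero y)) hp.le) hr

theorem InnerProductSpace.measureReal_ball_zero_one {E : Type*} [NormedAddCommGroup E]
    [InnerProductSpace ℝ E] [FiniteDimensional ℝ E] [MeasurableSpace E] [BorelSpace E]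
    [Nontrivial E] :
    volume.real (ball (0 : E) 1) =
      π ^ ((finrank ℝ E : ℝ) / 2) / Gamma (1 + (finrank ℝ E : ℝ) / 2) := by
  have hsqrt : √π ^ finrank ℝ E = π ^ ((finrank ℝ E : ℝ) / 2) := by
    rw [sqrt_eq_rpow, ← rpow_natCast, ← rpow_mul pi_pos.le, one_div_mul_eq_div]
  rw [measureReal_def, InnerProductSpace.volume_ball, ENNReal.ofReal_one, one_pow, one_mul,
    ENNReal.toReal_ofReal (by positivity), hsqrt, add_comm]

theorem radial_lemma_general (N : ℕ) (hN : 2 ≤ N) (ρ : ℝ)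
    (v : ℝ → ℝ) (u : EuclideanSpace ℝ (Fin N) → ℝ)
    (hrad : ∀ x : EuclideanSpace ℝ (Fin N), u x = v ‖x‖)
    (hu : ContDiff ℝ 1 u) (hsupp : ∀ r : ℝ, ρ ≤ r → v r = 0)
    (x : EuclideanSpace ℝ (Fin N)) (hx0 : 0 < ‖x‖) (hxρ : ‖x‖ < ρ) :
    |u x| ≤ (∫ y : EuclideanSpace ℝ (Fin N), ‖fderiv ℝ u y‖ ^ (N : ℝ)) ^ (1 / (N : ℝ)) *
        ((N : ℝ) * π ^ ((N : ℝ) / 2) / Real.Gamma (1 + (N : ℝ) / 2)) ^ (-(1 / (N : ℝ))) *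
        (Real.log (ρ / ‖x‖)) ^ (((N : ℝ) - 1) / N) := by
  have hN1 : (1 : ℝ) < N := by exact_mod_cast hN
  have : Nonempty (Fin N) := ⟨⟨0, by omega⟩⟩
  have hv : ContDiffOn ℝ 1 v (Ioi 0) := contDiffOn_of_radial hrad hu
  have hIcc : Icc ‖x‖ ρ ⊆ Ioi 0 := fun s hs => hx0.trans_le hs.1
  have hv' : ContinuousOn (deriv v) (Icc ‖x‖ ρ) :=
    (hv.continuousOn_deriv_of_isOpen isOpen_Ioi le_rfl).mono hIcc
  have hpolar := finrank_mul_measureReal_ball_mul_setIntegral_deriv_rpow_le volume hrad hu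
    (hasCompactSupport_of_radial hrad hsupp) (by positivity : (0 : ℝ) < N) hx0 (ρ := ρ)
  rw [InnerProductSpace.measureReal_ball_zero_one, finrank_euclideanSpace_fin] at hpolar
  set ω := (N : ℝ) * π ^ ((N : ℝ) / 2) / Gamma (1 + (N : ℝ) / 2)
  have hω : 0 < ω := by positivity
  calc |u x| = |v ρ - v ‖x‖| := by rw [hrad, hsupp ρ le_rfl, zero_sub, abs_neg]
    _ ≤ ∫ s in Icc ‖x‖ ρ, |deriv v s| :=
        abs_sub_le_integral_abs_deriv hxρ.le
          (fun s hs => hv.differentiableOn one_ne_zero |>.differentiableAt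
            (isOpen_Ioi.mem_nhds (hIcc hs))) hv'
    _ ≤ (∫ s in Icc ‖x‖ ρ, s ^ ((N : ℝ) - 1) * |deriv v s| ^ (N : ℝ)) ^ (1 / (N : ℝ)) *
          log (ρ / ‖x‖) ^ (((N : ℝ) - 1) / N) :=
        integral_abs_le_weighted_integral_rpow_mul_log hN1 hx0 hxρ.le hv'
    _ ≤ (ω⁻¹ * ∫ y, ‖fderiv ℝ u y‖ ^ (N : ℝ)) ^ (1 / (N : ℝ)) *
          log (ρ / ‖x‖) ^ (((N : ℝ) - 1) / N) := by
        gcongr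
        · exact rpow_nonneg (log_nonneg ((one_le_div hx0).mpr hxρ.le)) _
        · exact setIntegral_nonneg measurableSet_Icc fun s hs => by
            have : 0 < s := hIcc hs
            positivity
        · rw [le_inv_mul_iff₀ hω]; simpa [ω, mul_div_assoc] using hpolar
    _ = _ := by
        rw [mul_rpow (inv_nonneg.mpr hω.le) (integral_nonneg fun y => by positivity),
          inv_rpow hω.le, ← rpow_neg hω.le]
        ring

theorem radial_lemma (N : ℕ) (hN : 2 ≤ N) (ρ : ℝ) (hρ : 0 < ρ)
    (v : ℝ → ℝ) (u : EuclideanSpace ℝ (Fin N) → ℝ)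
    (hrad : ∀ x : EuclideanSpace ℝ (Fin N), u x = v ‖x‖)
    (hu : ContDiff ℝ 1 u) (hsupp : ∀ r : ℝ, ρ ≤ r → v r = 0)
    (x : EuclideanSpace ℝ (Fin N)) (hx0 : 0 < ‖x‖) (hxρ : ‖x‖ < ρ) :
    |u x| ≤ (∫ y : EuclideanSpace ℝ (Fin N), ‖fderiv ℝ u y‖ ^ (N : ℝ)) ^ (1 / (N : ℝ)) *
        ((N : ℝ) * π ^ ((N : ℝ) / 2) / Real.Gamma (1 + (N : ℝ) / 2)) ^ (-(1 / (N : ℝ))) *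
        (Real.log (ρ / ‖x‖)) ^ (((N : ℝ) - 1) / N) :=
  radial_lemma_general N hN ρ v u hrad hu hsupp x hx0 hxρ
end

section
/- (Improved Hardy inequality on a ball) For 1 ≤ p < N and any radial u ∈ C_c^1(B_R^N): ((N-p)/p)^p ∫_{B_R} |u(x)|^p / ( |x|^p (1 - (|x|/R)^{(N-p)/(p-1)})^p ) dx ≤ ∫_{B_R} |∇u(x)|^p dx. -/
/-!
Writing `u x = w ‖x‖`, polar coordinates turn both sides into one-dimensional integrals and the
inequality into `c ^ p ∫₀^ρ |w| ^ p V ≤ ∫₀^ρ r ^ (n - 1) |w'| ^ p`, where `c = (n - p) / p`,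
`V r = r ^ (n - 1) / (r φ r) ^ p`, `φ r = 1 - (r / R) ^ α` and `w` vanishes from `ρ < R` on.
The flux `H r = r ^ (n - p) (φ r) ^ (1 - p)` vanishes at `0` and satisfies `H' = (n - p) V`,
precisely because `α (p - 1) = n - p`. Integrating `(|w| ^ p H)'` over `[0, ρ]` gives
`(n - p) ∫ |w| ^ p V = -∫ (|w| ^ p)' H ≤ p ∫ |w| ^ (p - 1) |w'| H`, and Young's inequality bounds
the last integrand by `c ^ (1 - p) r ^ (n - 1) |w'| ^ p + (p - 1) c |w| ^ p V`.
-/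

open MeasureTheory Real

open Set intervalIntegral

theorem mul_rpow_sub_one_mul_le {p a b t : ℝ} (hp : 1 < p) (ha : 0 ≤ a) (hb : 0 ≤ b)
    (ht : 0 < t) : p * (b ^ (p - 1) * a) ≤ (p - 1) * t * b ^ p + t ^ (1 - p) * a ^ p := by
  have hp0 : 0 < p := by linarith
  have hamgm := geom_mean_le_arith_mean2_weighted (w₁ := (p - 1) / p) (w₂ := 1 / p)
    (p₁ := t * b ^ p) (p₂ := t ^ (1 - p) * a ^ p) (by bound) (by positivity) (by positivity)
    (by positivity) (by field_simp; ring)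
  have hgeom : (t * b ^ p) ^ ((p - 1) / p) * (t ^ (1 - p) * a ^ p) ^ (1 / p) = b ^ (p - 1) * a := by
    rw [mul_rpow ht.le (by positivity), mul_rpow (by positivity) (by positivity),
      ← rpow_mul hb, ← rpow_mul ha, ← rpow_mul ht.le]
    have hexp : (1 - p) * (1 / p) = -((p - 1) / p) := by ring
    rw [hexp, rpow_neg ht.le, mul_one_div_cancel hp0.ne', rpow_one]
    field_simp
  rw [hgeom] at hamgm
  calc p * (b ^ (p - 1) * a) ≤ p * ((p - 1) / p * (t * b ^ p) + 1 / p * (t ^ (1 - p) * a ^ p)) :=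
        by gcongr
    _ = _ := by field_simp

theorem one_sub_div_rpow_pos {R α r : ℝ} (hα : 0 < α) (hr : 0 ≤ r) (hrR : r < R) :
    0 < 1 - (r / R) ^ α := by
  have hRr : 0 < R := hr.trans_lt hrR
  have : (r / R) ^ α < 1 :=
    rpow_lt_one (div_nonneg hr hRr.le) ((div_lt_one hRr).2 hrR) hα
  linarith

theorem continuous_one_sub_div_rpow {R α : ℝ} (hα : 0 ≤ α) :
    Continuous fun r : ℝ => 1 - (r / R) ^ α :=
  continuous_const.sub ((continuous_id.div_const R).rpow_const fun _ => Or.inr hα)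

theorem abs_deriv_abs_rpow_comp {p : ℝ} (hp : 1 < p) {w : ℝ → ℝ} {r : ℝ}
    (hw : DifferentiableAt ℝ w r) :
    |deriv (fun s => |w s| ^ p) r| = p * (|w r| ^ (p - 1) * |deriv w r|) := by
  have hd : HasDerivAt (fun s => |w s| ^ p) _ r :=
    (hasDerivAt_abs_rpow (w r) hp).comp r hw.hasDerivAt
  rw [hd.deriv, abs_mul, abs_mul, abs_mul,
    abs_of_pos (by linarith : 0 < p), abs_of_nonneg (rpow_nonneg (abs_nonneg _) _)]
  rcases eq_or_ne (w r) 0 with h | h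
  · simp [h, zero_rpow (by linarith : p - 1 ≠ 0)]
  · rw [show p - 1 = p - 2 + 1 by ring, rpow_add_one (abs_ne_zero.2 h)]
    ring

theorem deriv_eq_zero_of_forall_ge_eq_zero {w : ℝ → ℝ} {ρ r : ℝ} (hw0 : ∀ s, ρ ≤ s → w s = 0)
    (hr : ρ < r) : deriv w r = 0 := by
  have hloc : w =ᶠ[nhds r] fun _ => 0 := by
    filter_upwards [lt_mem_nhds hr] with s hs using hw0 s hs.le
  rw [hloc.deriv_eq, deriv_const]

theorem integral_Ioi_eq_intervalIntegral {f : ℝ → ℝ} {a b : ℝ} (hab : a ≤ b)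
    (hf : ∀ r, b < r → f r = 0) : ∫ r in Ioi a, f r = ∫ r in a..b, f r := by
  rw [integral_of_le hab]
  exact setIntegral_eq_of_subset_of_forall_sdiff_eq_zero measurableSet_Ioi Ioc_subset_Ioi_self
    fun r hr => hf r (not_le.1 fun h => hr.2 ⟨hr.1, h⟩)

/-- `r ^ (n - 1)` times the weight `|x| ^ (-p) (1 - (|x| / R) ^ α) ^ (-p)` at `|x| = r`. -/
noncomputable def improvedHardyWeight (n p R α r : ℝ) : ℝ :=
  r ^ (n - 1) / (r ^ p * (1 - (r / R) ^ α) ^ p)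

noncomputable def improvedHardyFlux (n p R α r : ℝ) : ℝ :=
  r ^ (n - p) * (1 - (r / R) ^ α) ^ (1 - p)

section ImprovedHardyWeight

variable {n p R α r : ℝ}

theorem improvedHardyWeight_eq_rpow_mul_rpow (hα : 0 < α) (hr : 0 < r) (hrR : r < R) :
    improvedHardyWeight n p R α r = r ^ (n - 1 - p) * (1 - (r / R) ^ α) ^ (-p) := by
  rw [improvedHardyWeight, sub_eq_add_neg (n - 1) p, rpow_add hr, rpow_neg hr.le,
    rpow_neg (one_sub_div_rpow_pos hα hr.le hrR).le]
  ring

theorem hasDerivAt_improvedHardyFlux (hα0 : 0 < α) (hα : α * (p - 1) = n - p) (hr : 0 < r)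
    (hrR : r < R) :
    HasDerivAt (improvedHardyFlux n p R α) ((n - p) * improvedHardyWeight n p R α r) r := by
  have hR : 0 < R := hr.trans hrR
  have hφ := one_sub_div_rpow_pos hα0 hr.le hrR
  have hS : HasDerivAt (fun s => (s / R) ^ α) (1 / R * α * (r / R) ^ (α - 1)) r :=
    ((hasDerivAt_id' r).div_const R).rpow_const (Or.inl (by positivity))
  have hφp := (hS.const_sub 1).rpow_const (p := 1 - p) (Or.inl hφ.ne')
  have h : HasDerivAt (improvedHardyFlux n p R α) _ r :=
    (hasDerivAt_rpow_const (p := n - p) (Or.inl hr.ne')).mul hφp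
  convert h using 1
  rw [improvedHardyWeight, rpow_sub_one (by positivity : r / R ≠ 0), rpow_sub_one hφ.ne',
    rpow_sub_one hr.ne' (n - p), rpow_sub_one hr.ne' n, rpow_sub hr n p, rpow_sub hφ 1 p, rpow_one]
  set S := (r / R) ^ α
  field_simp
  linear_combination -S * hα

theorem continuousOn_improvedHardyFlux {ρ : ℝ} (hpn : p < n) (hα : 0 < α) (hρR : ρ < R) :
    ContinuousOn (improvedHardyFlux n p R α) (Icc 0 ρ) := by
  refine ContinuousOn.mul (continuous_rpow_const (by linarith)).continuousOn ?_
  exact (continuous_one_sub_div_rpow hα.le).continuousOn.rpow_const fun r hr =>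
    Or.inl (one_sub_div_rpow_pos hα hr.1 (hr.2.trans_lt hρR)).ne'

/-- Young's inequality with parameter `c / (r (1 - (r / R) ^ α))`. -/
theorem mul_improvedHardyFlux_le (hp : 1 < p) (hα : 0 < α) (hr : 0 < r) (hrR : r < R) {a b c : ℝ}
    (ha : 0 ≤ a) (hb : 0 ≤ b) (hc : 0 < c) :
    p * (b ^ (p - 1) * a) * improvedHardyFlux n p R α r ≤
      c ^ (1 - p) * (r ^ (n - 1) * a ^ p) +
        (p - 1) * c * (b ^ p * improvedHardyWeight n p R α r) := by
  rw [improvedHardyFlux, improvedHardyWeight]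
  have hφ := one_sub_div_rpow_pos hα hr.le hrR
  set φ := 1 - (r / R) ^ α
  have hyoung := mul_le_mul_of_nonneg_right
    (mul_rpow_sub_one_mul_le hp ha hb (t := c / (r * φ)) (by positivity))
    (by positivity : 0 ≤ r ^ (n - p) * φ ^ (1 - p))
  refine hyoung.trans_eq ?_
  rw [div_rpow hc.le (by positivity), mul_rpow hr.le hφ.le, rpow_sub hr 1 p, rpow_sub hφ 1 p,
    rpow_sub hr n p, rpow_sub hr n 1, rpow_one, rpow_one]
  field_simp
  ring

end ImprovedHardyWeight

section OneDim

variable {n p R α ρ : ℝ}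

theorem intervalIntegrable_mul_improvedHardyWeight (hpn : p < n) (hα : 0 < α) (hρ : 0 ≤ ρ)
    (hρR : ρ < R) {g : ℝ → ℝ} (hg : Continuous g) :
    IntervalIntegrable (fun r => g r * improvedHardyWeight n p R α r) volume 0 ρ := by
  have hφ : ∀ r ∈ Icc 0 ρ, 0 < 1 - (r / R) ^ α := fun r hr =>
    one_sub_div_rpow_pos hα hr.1 (hr.2.trans_lt hρR)
  have hcont : ContinuousOn (fun r => g r * (1 - (r / R) ^ α) ^ (-p)) (uIcc 0 ρ) := by
    rw [uIcc_of_le hρ]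
    exact hg.continuousOn.mul ((continuous_one_sub_div_rpow hα.le).continuousOn.rpow_const
      fun r hr => Or.inl (hφ r hr).ne')
  refine ((intervalIntegrable_rpow' (by linarith : -1 < n - 1 - p)).mul_continuousOn
    hcont).congr_uIoo fun r hr => ?_
  rw [uIoo_of_le hρ] at hr
  dsimp only
  rw [improvedHardyWeight_eq_rpow_mul_rpow hα hr.1 (hr.2.trans hρR)]
  ring

theorem integral_deriv_mul_improvedHardyFlux (hpn : p < n) (hα0 : 0 < α)
    (hα : α * (p - 1) = n - p) (hρ : 0 ≤ ρ) (hρR : ρ < R) {g : ℝ → ℝ} (hg : ContDiff ℝ 1 g)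
    (hgρ : g ρ = 0) :
    (∫ r in 0..ρ, deriv g r * improvedHardyFlux n p R α r) +
      (n - p) * ∫ r in 0..ρ, g r * improvedHardyWeight n p R α r = 0 := by
  set H := improvedHardyFlux n p R α
  set V := improvedHardyWeight n p R α
  have hHcont : ContinuousOn H (Icc 0 ρ) := continuousOn_improvedHardyFlux hpn hα0 hρR
  have hHint : IntervalIntegrable (fun r => deriv g r * H r) volume 0 ρ :=
    ((hg.continuous_deriv le_rfl).continuousOn.mul hHcont).intervalIntegrable_of_Icc hρ
  have hVint : IntervalIntegrable (fun r => (n - p) * (g r * V r)) volume 0 ρ :=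
    (intervalIntegrable_mul_improvedHardyWeight hpn hα0 hρ hρR hg.continuous).const_mul _
  have hderiv : ∀ r ∈ Ioo 0 ρ,
      HasDerivAt (fun r => g r * H r) (deriv g r * H r + (n - p) * (g r * V r)) r := fun r hr =>
    ((hg.differentiable one_ne_zero r).hasDerivAt.mul
      (hasDerivAt_improvedHardyFlux hα0 hα hr.1 (hr.2.trans hρR))).congr_deriv (by ring)
  rw [← intervalIntegral.integral_const_mul, ← integral_add hHint hVint,
    integral_eq_sub_of_hasDerivAt_of_le hρ (hg.continuous.continuousOn.mul hHcont) hderiv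
      (hHint.add hVint)]
  simp [H, improvedHardyFlux, hgρ, zero_rpow (by linarith : n - p ≠ 0)]

theorem neg_deriv_abs_rpow_mul_improvedHardyFlux_le (hp : 1 < p) (hα : 0 < α) {r : ℝ} (hr : 0 < r)
    (hrR : r < R) {w : ℝ → ℝ} (hw : DifferentiableAt ℝ w r) {c : ℝ} (hc : 0 < c) :
    -(deriv (fun s => |w s| ^ p) r * improvedHardyFlux n p R α r) ≤
      c ^ (1 - p) * (r ^ (n - 1) * |deriv w r| ^ p) +
        (p - 1) * c * (|w r| ^ p * improvedHardyWeight n p R α r) := by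
  have hH : 0 ≤ improvedHardyFlux n p R α r :=
    mul_nonneg (rpow_nonneg hr.le _) (rpow_nonneg (one_sub_div_rpow_pos hα hr.le hrR).le _)
  calc _ ≤ |deriv (fun s => |w s| ^ p) r| * improvedHardyFlux n p R α r := by
        rw [← neg_mul]; exact mul_le_mul_of_nonneg_right (neg_le_abs _) hH
    _ = p * (|w r| ^ (p - 1) * |deriv w r|) * improvedHardyFlux n p R α r := by
        rw [abs_deriv_abs_rpow_comp hp hw]
    _ ≤ _ := mul_improvedHardyFlux_le hp hα hr hrR (abs_nonneg _) (abs_nonneg _) hc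

theorem improved_hardy_intervalIntegral (hp : 1 < p) (hpn : p < n) (hα : α * (p - 1) = n - p)
    (hρ : 0 ≤ ρ) (hρR : ρ < R) {w : ℝ → ℝ} (hw : ContDiff ℝ 1 w) (hwρ : w ρ = 0) :
    ((n - p) / p) ^ p * ∫ r in 0..ρ, |w r| ^ p * improvedHardyWeight n p R α r ≤
      ∫ r in 0..ρ, r ^ (n - 1) * |deriv w r| ^ p := by
  have hα0 : 0 < α := pos_of_mul_pos_left (hα ▸ sub_pos.2 hpn) (by linarith)
  set c := (n - p) / p with hc_def
  have hc : 0 < c := div_pos (by linarith) (by linarith)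
  have hg : ContDiff ℝ 1 fun r => |w r| ^ p := (contDiff_norm_rpow (E := ℝ) hp).comp hw
  have hparts := integral_deriv_mul_improvedHardyFlux hpn hα0 hα hρ hρR hg
    (by simp [hwρ, zero_rpow (by linarith : p ≠ 0)])
  have hVint := intervalIntegrable_mul_improvedHardyWeight (n := n) (R := R) hpn hα0 hρ hρR
    hg.continuous
  have hHint : IntervalIntegrable
      (fun r => deriv (fun s => |w s| ^ p) r * improvedHardyFlux n p R α r) volume 0 ρ :=
    ((hg.continuous_deriv le_rfl).continuousOn.mul
      (continuousOn_improvedHardyFlux hpn hα0 hρR)).intervalIntegrable_of_Icc hρ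
  have hJint : IntervalIntegrable (fun r => r ^ (n - 1) * |deriv w r| ^ p) volume 0 ρ :=
    ((continuous_rpow_const (by linarith)).mul ((hw.continuous_deriv le_rfl).abs.rpow_const
      fun _ => Or.inr (by linarith))).intervalIntegrable 0 ρ
  have hmono := integral_mono_on_of_le_Ioo hρ hHint.neg
    ((hJint.const_mul _).add (hVint.const_mul _)) fun r hr =>
      neg_deriv_abs_rpow_mul_improvedHardyFlux_le hp hα0 hr.1 (hr.2.trans hρR)
        (hw.differentiable one_ne_zero r) hc
  simp only [Pi.neg_apply, intervalIntegral.integral_neg] at hmono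
  rw [integral_add (hJint.const_mul _) (hVint.const_mul _),
    intervalIntegral.integral_const_mul, intervalIntegral.integral_const_mul] at hmono
  set I := ∫ r in 0..ρ, |w r| ^ p * improvedHardyWeight n p R α r
  set J := ∫ r in 0..ρ, r ^ (n - 1) * |deriv w r| ^ p
  have hnp : (n - p) * I = p * c * I := by rw [hc_def]; field_simp
  have hcI : c * I ≤ c ^ (1 - p) * J := by linarith
  calc c ^ p * I = c ^ (p - 1) * (c * I) := by rw [← mul_assoc, ← rpow_add_one hc.ne']; ring_nf
    _ ≤ c ^ (p - 1) * (c ^ (1 - p) * J) := by gcongr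
    _ = J := by rw [← mul_assoc, ← rpow_add hc]; simp

theorem improved_hardy_Ioi (hp : 1 < p) (hpn : p < n) (hα : α * (p - 1) = n - p)
    (hρ : 0 ≤ ρ) (hρR : ρ < R) {w : ℝ → ℝ} (hw : ContDiff ℝ 1 w) (hw0 : ∀ r, ρ ≤ r → w r = 0) :
    ((n - p) / p) ^ p * ∫ r in Ioi 0, r ^ (n - 1) * (|w r| ^ p / (r ^ p * (1 - (r / R) ^ α) ^ p)) ≤
      ∫ r in Ioi 0, r ^ (n - 1) * |deriv w r| ^ p := by
  have hp0 : p ≠ 0 := by linarith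
  rw [integral_Ioi_eq_intervalIntegral hρ fun r hr => by simp [hw0 r hr.le, zero_rpow hp0],
    integral_Ioi_eq_intervalIntegral hρ fun r hr => by
      simp [deriv_eq_zero_of_forall_ge_eq_zero hw0 hr, zero_rpow hp0]]
  convert improved_hardy_intervalIntegral hp hpn hα hρ hρR hw (hw0 ρ le_rfl) using 3
  ext r
  rw [improvedHardyWeight]
  ring

end OneDim

section Radial

variable {E : Type*} [NormedAddCommGroup E] [NormedSpace ℝ E]

theorem exists_contDiff_profile_of_radial [Nontrivial E] {k : WithTop ℕ∞} {u : E → ℝ}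
    (hrad : ∃ v : ℝ → ℝ, ∀ x, u x = v ‖x‖) (hu : ContDiff ℝ k u) :
    ∃ w : ℝ → ℝ, ContDiff ℝ k w ∧ ∀ x, u x = w ‖x‖ := by
  obtain ⟨v, hv⟩ := hrad
  obtain ⟨e, he⟩ := exists_norm_eq E zero_le_one
  refine ⟨fun r => u (r • e), hu.comp (contDiff_id.smul contDiff_const), fun x => ?_⟩
  simp only [hv, norm_smul, he, mul_one, norm_norm]

theorem eq_zero_of_radial_of_tsupport_subset_ball [Nontrivial E] {u : E → ℝ} {w : ℝ → ℝ}
    (huw : ∀ x, u x = w ‖x‖) {ρ r : ℝ} (hsub : tsupport u ⊆ Metric.ball 0 ρ) (hρ : 0 ≤ ρ)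
    (hr : ρ ≤ r) : w r = 0 := by
  obtain ⟨x, rfl⟩ := exists_norm_eq E (hρ.trans hr)
  rw [← huw]
  exact image_eq_zero_of_notMem_tsupport fun hx => hr.not_gt (mem_ball_zero_iff.1 (hsub hx))

theorem abs_deriv_le_norm_fderiv_of_radial {u : E → ℝ} {w : ℝ → ℝ} (huw : ∀ x, u x = w ‖x‖)
    {x : E} (hx : x ≠ 0) (hu : DifferentiableAt ℝ u x) : |deriv w ‖x‖| ≤ ‖fderiv ℝ u x‖ := by
  set e := ‖x‖⁻¹ • x
  have he : ‖e‖ = 1 := norm_smul_inv_norm hx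
  have hxe : ‖x‖ • e = x := by simp [e, smul_smul, hx]
  have hline : w =ᶠ[nhds ‖x‖] fun s => u (s • e) := by
    filter_upwards [lt_mem_nhds (norm_pos_iff.2 hx)] with s hs
    rw [huw, norm_smul, he, mul_one, Real.norm_of_nonneg hs.le]
  have hd : HasDerivAt (fun s => u (s • e)) (fderiv ℝ u x e) ‖x‖ := by
    have hu' : HasFDerivAt u (fderiv ℝ u x) (‖x‖ • e) := by rw [hxe]; exact hu.hasFDerivAt
    have hl : HasDerivAt (fun s : ℝ => s • e) e ‖x‖ := by
      simpa using (hasDerivAt_id ‖x‖).smul_const e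
    exact hu'.comp_hasDerivAt ‖x‖ hl
  rw [hline.deriv_eq, hd.deriv, ← Real.norm_eq_abs]
  simpa [he] using (fderiv ℝ u x).le_opNorm e

variable [FiniteDimensional ℝ E] [MeasurableSpace E] [BorelSpace E] [Nontrivial E]
  (μ : Measure E) [μ.IsAddHaarMeasure]

theorem setIntegral_ball_fun_norm {f : ℝ → ℝ} {R : ℝ} (hf : ∀ r, R ≤ r → f r = 0) :
    ∫ x in Metric.ball (0 : E) R, f ‖x‖ ∂μ = Module.finrank ℝ E * μ.real (Metric.ball 0 1) *
      ∫ r in Ioi 0, r ^ ((Module.finrank ℝ E : ℝ) - 1) * f r := by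
  rw [setIntegral_eq_integral_of_forall_compl_eq_zero fun x hx => hf _ (by simpa using hx),
    integral_fun_norm_addHaar, nsmul_eq_mul, smul_eq_mul, mul_assoc]
  congr 2
  refine setIntegral_congr_fun measurableSet_Ioi fun r hr => ?_
  rw [smul_eq_mul, ← rpow_natCast, Nat.cast_sub Module.finrank_pos, Nat.cast_one]

theorem setIntegral_ball_abs_deriv_rpow_le {p R : ℝ} (hp : 0 ≤ p) {u : E → ℝ} {w : ℝ → ℝ}
    (huw : ∀ x, u x = w ‖x‖) (hu : ContDiff ℝ 1 u) :
    ∫ x in Metric.ball (0 : E) R, |deriv w ‖x‖| ^ p ∂μ ≤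
      ∫ x in Metric.ball (0 : E) R, ‖fderiv ℝ u x‖ ^ p ∂μ := by
  refine integral_mono_of_nonneg (ae_of_all _ fun x => by positivity) ?_ ?_
  · have hcont : Continuous fun x => ‖fderiv ℝ u x‖ ^ p :=
      (hu.continuous_fderiv one_ne_zero).norm.rpow_const fun _ => Or.inr hp
    exact (hcont.continuousOn.integrableOn_compact (isCompact_closedBall 0 R)).mono_set
      Metric.ball_subset_closedBall
  · filter_upwards [ae_restrict_of_ae (Measure.ae_ne μ 0)] with x hx
    exact rpow_le_rpow (abs_nonneg _)
      (abs_deriv_le_norm_fderiv_of_radial huw hx (hu.differentiable one_ne_zero x)) hp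

theorem improved_hardy_of_radial {p R : ℝ} (hp : 1 < p) (hpn : p < Module.finrank ℝ E)
    (hR : 0 < R) {u : E → ℝ} (hrad : ∃ v : ℝ → ℝ, ∀ x, u x = v ‖x‖) (hu : ContDiff ℝ 1 u)
    (hsupp : tsupport u ⊆ Metric.ball 0 R) :
    (((Module.finrank ℝ E : ℝ) - p) / p) ^ p * ∫ x in Metric.ball (0 : E) R,
        |u x| ^ p / (‖x‖ ^ p * (1 - (‖x‖ / R) ^ (((Module.finrank ℝ E : ℝ) - p) / (p - 1))) ^ p) ∂μ
      ≤ ∫ x in Metric.ball (0 : E) R, ‖fderiv ℝ u x‖ ^ p ∂μ := by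
  set n : ℝ := (Module.finrank ℝ E : ℝ)
  obtain ⟨w, hw, huw⟩ := exists_contDiff_profile_of_radial hrad hu
  obtain ⟨ρ, ⟨hρ, hρR⟩, hρsub⟩ := exists_pos_lt_subset_ball hR (isClosed_tsupport u) hsupp
  have hw0 : ∀ r, ρ ≤ r → w r = 0 := fun r =>
    eq_zero_of_radial_of_tsupport_subset_ball huw hρsub hρ.le
  have hp0 : p ≠ 0 := by linarith
  have hα : (n - p) / (p - 1) * (p - 1) = n - p := div_mul_cancel₀ _ (by linarith)
  have hpolar := setIntegral_ball_fun_norm μ (R := R)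
    (f := fun r => |w r| ^ p / (r ^ p * (1 - (r / R) ^ ((n - p) / (p - 1))) ^ p))
    fun r hr => by simp [hw0 r (hρR.le.trans hr), zero_rpow hp0]
  have hpolar' := setIntegral_ball_fun_norm μ (R := R) (f := fun r => |deriv w r| ^ p)
    fun r hr => by simp [deriv_eq_zero_of_forall_ge_eq_zero hw0 (hρR.trans_le hr), zero_rpow hp0]
  simp_rw [huw]
  calc _ = n * μ.real (Metric.ball 0 1) * (((n - p) / p) ^ p * ∫ r in Ioi 0, r ^ (n - 1) *
        (|w r| ^ p / (r ^ p * (1 - (r / R) ^ ((n - p) / (p - 1))) ^ p))) := by rw [hpolar]; ring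
    _ ≤ n * μ.real (Metric.ball 0 1) * ∫ r in Ioi 0, r ^ (n - 1) * |deriv w r| ^ p := by
        gcongr
        exact improved_hardy_Ioi hp hpn hα hρ.le hρR hw hw0
    _ = ∫ x in Metric.ball (0 : E) R, |deriv w ‖x‖| ^ p ∂μ := hpolar'.symm
    _ ≤ _ := setIntegral_ball_abs_deriv_rpow_le μ (by linarith) huw hu

end Radial

theorem improved_hardy_inequality_general (N : ℕ) (p R : ℝ) (hp : 1 ≤ p)
    (hpN : p < N) (hR : 0 < R)
    (u : EuclideanSpace ℝ (Fin N) → ℝ)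
    (hrad : ∃ v : ℝ → ℝ, ∀ x, u x = v ‖x‖)
    (hreg : ContDiff ℝ 1 u)
    (hsupp' : tsupport u ⊆ Metric.ball (0 : EuclideanSpace ℝ (Fin N)) R) :
    (((N : ℝ) - p) / p) ^ p *
        ∫ x in Metric.ball (0 : EuclideanSpace ℝ (Fin N)) R,
          |u x| ^ p / (‖x‖ ^ p * (1 - (‖x‖ / R) ^ (((N : ℝ) - p) / (p - 1))) ^ p)
      ≤ ∫ x in Metric.ball (0 : EuclideanSpace ℝ (Fin N)) R, ‖fderiv ℝ u x‖ ^ p := by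
  rcases hp.eq_or_lt with rfl | hp
  · -- For `p = 1` the exponent `(N - 1) / 0` is `0`, so the denominator vanishes and the
    -- integrand is `_ / 0 = 0`.
    simpa using setIntegral_nonneg measurableSet_ball fun x _ => by positivity
  have : Nontrivial (EuclideanSpace ℝ (Fin N)) := by
    have : Nonempty (Fin N) := ⟨⟨0, by exact_mod_cast (by linarith : (0 : ℝ) < N)⟩⟩
    infer_instance
  simpa only [finrank_euclideanSpace_fin] using
    improved_hardy_of_radial volume hp (by simpa using hpN) hR hrad hreg hsupp'

theorem improved_hardy_inequality (N : ℕ) (hN : 2 ≤ N) (p R : ℝ) (hp : 1 ≤ p)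
    (hpN : p < N) (hR : 0 < R)
    (u : EuclideanSpace ℝ (Fin N) → ℝ)
    (hrad : ∃ v : ℝ → ℝ, ∀ x, u x = v ‖x‖)
    (hreg : ContDiff ℝ 1 u) (hsupp : HasCompactSupport u)
    (hsupp' : tsupport u ⊆ Metric.ball (0 : EuclideanSpace ℝ (Fin N)) R) :
    (((N : ℝ) - p) / p) ^ p *
        ∫ x in Metric.ball (0 : EuclideanSpace ℝ (Fin N)) R,
          |u x| ^ p / (‖x‖ ^ p * (1 - (‖x‖ / R) ^ (((N : ℝ) - p) / (p - 1))) ^ p)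
      ≤ ∫ x in Metric.ball (0 : EuclideanSpace ℝ (Fin N)) R, ‖fderiv ℝ u x‖ ^ p :=
  improved_hardy_inequality_general N p R hp hpN hR u hrad hreg hsupp'
end

section
/- Let 1 ≤ p < m ≤ N and let u : ℝ^m → ℝ and w : ℝ^N → ℝ be radial functions related by u(r) = w(t) where r^{-(m-p)/(p-1)} = t^{-(N-p)/(p-1)}. Then ∫_{ℝ^N} |∇w|^p dy = (ω_{N-1}/ω_{m-1}) · ((N-p)/(m-p))^{p-1} · ∫_{ℝ^m} |∇u|^p dx. -/
/-!
Both gradients are radial, `|∇U(x)| = |u'(|x|)|` and `|∇W(y)| = |w'(|y|)|`, so polar coordinates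
turn each energy into `ω_{n-1} ∫₀^∞ rⁿ⁻¹ |v'(r)|ᵖ dr`. The relation between `u` and `w` says
`w(t) = u(t^γ)` with `γ = (N - p)/(m - p)`; substituting `r = t^γ` in the `m`-dimensional energy,
the chain-rule factor `γ t^(γ-1)` produces `γ^(p-1)` and matches the weights `t^(N-1)` and
`r^(m-1)` precisely because `γ (m - p) = N - p`.
-/

open MeasureTheory Real Module Set

/-- The paper's `ω_{n-1}`. -/
noncomputable def unitSphereArea (n : ℕ) : ℝ :=
  n * π ^ ((n : ℝ) / 2) / Gamma (1 + (n : ℝ) / 2)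

theorem unitSphereArea_pos {n : ℕ} (hn : 0 < n) : 0 < unitSphereArea n := by
  unfold unitSphereArea
  positivity

section InnerProductSpace

variable {E : Type*} [NormedAddCommGroup E] [InnerProductSpace ℝ E]

theorem norm_fderiv_comp_norm {v : ℝ → ℝ} {x : E} (hx : x ≠ 0) {c : ℝ}
    (hv : HasDerivAt v c ‖x‖) : ‖fderiv ℝ (fun y : E => v ‖y‖) x‖ = |c| := by
  have : Nontrivial E := ⟨⟨x, 0, hx⟩⟩
  have hnorm : DifferentiableAt ℝ (‖·‖) x := (contDiffAt_norm ℝ hx).differentiableAt one_ne_zero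
  have hcomp : HasFDerivAt (fun y : E => v ‖y‖) (c • fderiv ℝ (‖·‖) x) x :=
    hv.comp_hasFDerivAt x hnorm.hasFDerivAt
  rw [hcomp.fderiv, norm_smul, norm_fderiv_norm hnorm, mul_one, Real.norm_eq_abs]

variable [FiniteDimensional ℝ E] [MeasurableSpace E] [BorelSpace E] [Nontrivial E]

theorem finrank_mul_volume_real_ball_zero_one :
    finrank ℝ E * volume.real (Metric.ball (0 : E) 1) = unitSphereArea (finrank ℝ E) := by
  have hΓ : 0 < Gamma ((finrank ℝ E : ℝ) / 2 + 1) := Gamma_pos_of_pos (by positivity)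
  have hsqrt : √π ^ finrank ℝ E = π ^ ((finrank ℝ E : ℝ) / 2) := by
    rw [sqrt_eq_rpow, ← rpow_natCast, ← rpow_mul pi_pos.le, one_div_mul_eq_div]
  rw [measureReal_def, InnerProductSpace.volume_ball, ENNReal.ofReal_one, one_pow, one_mul,
    ENNReal.toReal_ofReal (by positivity), hsqrt, add_comm, unitSphereArea, mul_div_assoc]

theorem integral_norm_fderiv_rpow_of_radial {V : E → ℝ} {v v' : ℝ → ℝ}
    (hV : ∀ x, V x = v ‖x‖) (hv : ∀ r, 0 < r → HasDerivAt v (v' r) r) (p : ℝ) :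
    ∫ x, ‖fderiv ℝ V x‖ ^ p
      = unitSphereArea (finrank ℝ E) * ∫ r in Ioi 0, r ^ ((finrank ℝ E : ℝ) - 1) * |v' r| ^ p := by
  obtain rfl : V = fun x => v ‖x‖ := funext hV
  have hae : (fun x : E => ‖fderiv ℝ (fun y : E => v ‖y‖) x‖ ^ p) =ᵐ[volume]
      fun x => |v' ‖x‖| ^ p := by
    filter_upwards [Measure.ae_ne volume (0 : E)] with x hx
    rw [norm_fderiv_comp_norm hx (hv _ (norm_pos_iff.2 hx))]
  have hpow : ∀ r ∈ Ioi (0 : ℝ), r ^ (finrank ℝ E - 1) = r ^ ((finrank ℝ E : ℝ) - 1) := by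
    intro r _
    rw [← rpow_natCast, Nat.cast_sub finrank_pos, Nat.cast_one]
  rw [integral_congr_ae hae, integral_fun_norm_addHaar volume (fun r => |v' r| ^ p),
    setIntegral_congr_fun measurableSet_Ioi (fun r hr => by rw [smul_eq_mul, hpow r hr]),
    nsmul_eq_mul, smul_eq_mul, ← mul_assoc, finrank_mul_volume_real_ball_zero_one]

end InnerProductSpace

theorem differentiableAt_of_differentiable_comp_norm {E : Type*} [NormedAddCommGroup E]
    [NormedSpace ℝ E] [Nontrivial E] {U : E → ℝ} {u : ℝ → ℝ} (hU : ∀ x, U x = u ‖x‖)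
    (hUd : Differentiable ℝ U) {r : ℝ} (hr : 0 < r) : DifferentiableAt ℝ u r := by
  obtain ⟨e, he⟩ := exists_norm_eq E zero_le_one
  have hline : DifferentiableAt ℝ (fun s : ℝ => U (s • e)) r :=
    hUd.differentiableAt.comp r (differentiableAt_id.smul_const e)
  refine hline.congr_of_eventuallyEq ?_
  filter_upwards [Ioi_mem_nhds hr] with s hs
  rw [hU, norm_smul, he, mul_one, Real.norm_of_nonneg (le_of_lt hs)]

theorem integral_Ioi_rpow_mul_abs_comp_rpow_mul_deriv {a b p γ : ℝ} (hγ : 0 < γ)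
    (hab : γ * (a - p) = b - p) (g : ℝ → ℝ) :
    ∫ t in Ioi 0, t ^ (b - 1) * |g (t ^ γ) * (γ * t ^ (γ - 1))| ^ p
      = γ ^ (p - 1) * ∫ r in Ioi 0, r ^ (a - 1) * |g r| ^ p := by
  rw [← integral_comp_rpow_Ioi (fun r => r ^ (a - 1) * |g r| ^ p) hγ.ne', ← integral_const_mul]
  refine setIntegral_congr_fun measurableSet_Ioi fun t (ht : 0 < t) => ?_
  have hexp : t ^ (b - 1) * t ^ ((γ - 1) * p) = t ^ (γ - 1) * t ^ (γ * (a - 1)) := by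
    rw [← rpow_add ht, ← rpow_add ht]
    congr 1
    linear_combination hab.symm
  have hγp : γ ^ p = γ ^ (p - 1) * γ := by
    rw [rpow_sub hγ, rpow_one, div_mul_cancel₀ _ hγ.ne']
  simp only [smul_eq_mul, abs_of_pos hγ]
  rw [abs_mul, abs_of_pos (by positivity : 0 < γ * t ^ (γ - 1)),
    mul_rpow (abs_nonneg _) (by positivity), mul_rpow hγ.le (by positivity), ← rpow_mul ht.le,
    ← rpow_mul ht.le, hγp]
  linear_combination (|g (t ^ γ)| ^ p * (γ ^ (p - 1) * γ)) * hexp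

theorem dimension_reduction_gradient_general (m N : ℕ) (p : ℝ) (hp : 1 < p)
    (hpm : p < m) (hmN : m ≤ N) (u w : ℝ → ℝ)
    (U : EuclideanSpace ℝ (Fin m) → ℝ) (W : EuclideanSpace ℝ (Fin N) → ℝ)
    (hU : ∀ x, U x = u ‖x‖) (hW : ∀ y, W y = w ‖y‖)
    (hUreg : ContDiff ℝ 1 U)
    (hrel : ∀ r t : ℝ, 0 < r → 0 < t →
      r ^ (-(((m : ℝ) - p) / (p - 1))) = t ^ (-(((N : ℝ) - p) / (p - 1))) → u r = w t) :
    ∫ y : EuclideanSpace ℝ (Fin N), ‖fderiv ℝ W y‖ ^ p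
      = (((N : ℝ) * π ^ ((N : ℝ) / 2) / Real.Gamma (1 + (N : ℝ) / 2)) /
          ((m : ℝ) * π ^ ((m : ℝ) / 2) / Real.Gamma (1 + (m : ℝ) / 2))) *
        (((N : ℝ) - p) / ((m : ℝ) - p)) ^ (p - 1) *
        ∫ x : EuclideanSpace ℝ (Fin m), ‖fderiv ℝ U x‖ ^ p := by
  have hmp : 0 < (m : ℝ) - p := sub_pos.2 hpm
  have hNp : 0 < (N : ℝ) - p := by linarith [(Nat.cast_le (α := ℝ)).2 hmN]
  have hm : 0 < m := by exact_mod_cast (zero_lt_one.trans hp).trans hpm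
  have : Nonempty (Fin m) := ⟨⟨0, hm⟩⟩
  have : Nonempty (Fin N) := ⟨⟨0, hm.trans_le hmN⟩⟩
  set γ := ((N : ℝ) - p) / ((m : ℝ) - p) with hγ_def
  have hγ : 0 < γ := div_pos hNp hmp
  have hu : ∀ r, 0 < r → HasDerivAt u (deriv u r) r := fun r hr =>
    (differentiableAt_of_differentiable_comp_norm hU (hUreg.differentiable one_ne_zero)
      hr).hasDerivAt
  have hwu : ∀ t, 0 < t → w t = u (t ^ γ) := fun t ht =>
    (hrel _ t (rpow_pos_of_pos ht γ) ht (by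
      rw [← rpow_mul ht.le, hγ_def, mul_neg, div_mul_div_cancel₀ hmp.ne'])).symm
  have hw : ∀ t, 0 < t → HasDerivAt w (deriv u (t ^ γ) * (γ * t ^ (γ - 1))) t := fun t ht =>
    ((hu _ (rpow_pos_of_pos ht γ)).comp t
      (hasDerivAt_rpow_const (Or.inl ht.ne'))).congr_of_eventuallyEq
      (Filter.eventually_of_mem (Ioi_mem_nhds ht) hwu)
  rw [integral_norm_fderiv_rpow_of_radial hW hw, integral_norm_fderiv_rpow_of_radial hU hu,
    finrank_euclideanSpace_fin, finrank_euclideanSpace_fin,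
    integral_Ioi_rpow_mul_abs_comp_rpow_mul_deriv hγ (by rw [hγ_def, div_mul_cancel₀ _ hmp.ne'])]
  change unitSphereArea N * _ = unitSphereArea N / unitSphereArea m * _ * (unitSphereArea m * _)
  field_simp [(unitSphereArea_pos hm).ne']

theorem dimension_reduction_gradient (m N : ℕ) (p : ℝ) (hp : 1 < p)
    (hpm : p < m) (hmN : m ≤ N) (u w : ℝ → ℝ)
    (U : EuclideanSpace ℝ (Fin m) → ℝ) (W : EuclideanSpace ℝ (Fin N) → ℝ)
    (hU : ∀ x, U x = u ‖x‖) (hW : ∀ y, W y = w ‖y‖)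
    (hUreg : ContDiff ℝ 1 U) (hUsupp : HasCompactSupport U)
    (hrel : ∀ r t : ℝ, 0 < r → 0 < t →
      r ^ (-(((m : ℝ) - p) / (p - 1))) = t ^ (-(((N : ℝ) - p) / (p - 1))) → u r = w t) :
    ∫ y : EuclideanSpace ℝ (Fin N), ‖fderiv ℝ W y‖ ^ p
      = (((N : ℝ) * π ^ ((N : ℝ) / 2) / Real.Gamma (1 + (N : ℝ) / 2)) /
          ((m : ℝ) * π ^ ((m : ℝ) / 2) / Real.Gamma (1 + (m : ℝ) / 2))) *
        (((N : ℝ) - p) / ((m : ℝ) - p)) ^ (p - 1) *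
        ∫ x : EuclideanSpace ℝ (Fin m), ‖fderiv ℝ U x‖ ^ p :=
  dimension_reduction_gradient_general m N p hp hpm hmN u w U W hU hW hUreg hrel
end

section
/- Fix 1 ≤ p < m. Then the limit as N → ∞ of S_{N,p} · (ω_{m-1}/ω_{N-1})^{p/N} · ((m-p)/(N-p))^{p - p/N} equals ((m-p)/p)^p, where S_{N,p} = π^{p/2} N ((N-p)/(p-1))^{p-1} (Γ(N/p)Γ(N+1-N/p)/(Γ(N)Γ(1+N/2)))^{p/N} and ω_{k-1} = kπ^{k/2}/Γ(1+k/2). -/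
/-!
The factors `π^{N/2}` and `Γ(1 + N/2)` of `S_{N,p}` and `ω_{N-1}` cancel, so up to factors tending
to `1` the quantity is `(m - p)^p (p - 1)^{1-p} B_N^{p/N}` with
`B_N = Γ(N/p) Γ(N + 1 - N/p) / Γ(N + 1)`. Stirling's formula for factorials and the monotonicity
of `Γ` on `[2, ∞)` give `log Γ(t) = t log t - t + O(log t)`, hence `(log B_N) / N → -h(1/p)` with
`h` the binary entropy, i.e. `B_N^{p/N} → p⁻¹ (1 - 1/p)^{p-1}`.
-/

open Real Filter Topology Asymptotics
open scoped Nat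

lemma mul_log_sub_self_le_add_mul_log {x y : ℝ} (hx : 0 < x) (hxy : x ≤ y) :
    y * log y - y ≤ x * log x - x + (y - x) * log y := by
  have hy : 0 < y := hx.trans_le hxy
  have hlog : log y - log x ≤ y / x - 1 := by
    rw [← log_div hy.ne' hx.ne']
    exact log_le_sub_one_of_pos (by positivity)
  have : x * (log y - log x) ≤ y - x := by
    calc x * (log y - log x) ≤ x * (y / x - 1) := by gcongr
      _ = y - x := by field_simp
  linarith

lemma mul_log_sub_self_le_of_one_le {x y : ℝ} (hx : 1 ≤ x) (hxy : x ≤ y) :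
    x * log x - x ≤ y * log y - y := by
  have hx0 : 0 < x := by linarith
  have hy : 0 < y := hx0.trans_le hxy
  have hlog : 1 - x / y ≤ log y - log x := by
    rw [← log_div hy.ne' hx0.ne', ← inv_div]
    exact one_sub_inv_le_log_of_pos (by positivity)
  have : y - x ≤ y * (log y - log x) := by
    calc y - x = y * (1 - x / y) := by field_simp
      _ ≤ y * (log y - log x) := by gcongr
  nlinarith [mul_nonneg (sub_nonneg.2 hxy) (log_nonneg hx)]

lemma log_factorial_le_stirling {n : ℕ} (hn : n ≠ 0) :
    log n ! ≤ n * log n - n + log n / 2 + 1 := by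
  have hn0 : (0 : ℝ) < n := by positivity
  have hseq : Stirling.stirlingSeq n ≤ exp 1 / √2 := by
    obtain ⟨k, rfl⟩ := Nat.exists_eq_succ_of_ne_zero hn
    rw [← Stirling.stirlingSeq_one]
    exact Stirling.stirlingSeq'_antitone (Nat.zero_le k)
  have hpos : 0 < Stirling.stirlingSeq n := by
    obtain ⟨k, rfl⟩ := Nat.exists_eq_succ_of_ne_zero hn
    exact Stirling.stirlingSeq'_pos k
  have hlog := log_le_log hpos hseq
  rw [Stirling.stirlingSeq, log_div (by positivity) (by positivity), log_mul (by positivity)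
    (by positivity), log_pow, log_div hn0.ne' (exp_pos 1).ne', log_div (exp_pos 1).ne'
    (by positivity), log_exp, log_sqrt (by positivity), log_sqrt (by positivity),
    log_mul two_ne_zero hn0.ne'] at hlog
  linarith

lemma abs_log_Gamma_sub_le {t : ℝ} (ht : 2 ≤ t) :
    |log (Gamma t) - (t * log t - t)| ≤ 2 * log t + 1 := by
  set n := ⌊t⌋₊
  have hn : 2 ≤ n := Nat.le_floor (by exact_mod_cast ht)
  have hn2 : (2 : ℝ) ≤ n := by exact_mod_cast hn
  have hnt : (n : ℝ) ≤ t := Nat.floor_le (by linarith)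
  have htn : t ≤ n + 1 := (Nat.lt_floor_add_one t).le
  have hΓ : Gamma n ≤ Gamma t ∧ Gamma t ≤ n ! := by
    rw [← Gamma_nat_eq_factorial]
    exact ⟨Gamma_strictMonoOn_Ici.monotoneOn hn2 ht hnt,
      Gamma_strictMonoOn_Ici.monotoneOn ht (by simp only [Set.mem_Ici]; linarith) htn⟩
  have hΓn : log (Gamma n) = log n ! - log n := by
    rw [← Gamma_nat_eq_factorial, Gamma_add_one (by positivity), log_mul (by positivity)
      (Gamma_pos_of_pos (by positivity)).ne']
    ring
  have hlogn : log n ≤ log t := log_le_log (by positivity) hnt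
  have hlogt : 0 ≤ log t := log_nonneg (by linarith)
  have hlog2π : 0 < log (2 * π) := log_pos (by linarith [pi_gt_three])
  have hlower := Stirling.le_log_factorial_stirling (n := n) (by omega)
  have hupper := log_factorial_le_stirling (n := n) (by omega)
  have hmono := mul_log_sub_self_le_of_one_le (by linarith) hnt
  have hshift := mul_log_sub_self_le_add_mul_log (by linarith) hnt
  have hfrac : (t - n) * log t ≤ log t := mul_le_of_le_one_left hlogt (by linarith)
  have hΓt := log_le_log (Gamma_pos_of_pos (by linarith)) hΓ.2
  have hΓn' := log_le_log (Gamma_pos_of_pos (by linarith)) hΓ.1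
  rw [abs_le]
  constructor <;> linarith

lemma isLittleO_log_Gamma_sub : (fun t ↦ log (Gamma t) - (t * log t - t)) =o[atTop] id := by
  have hbound : (fun t ↦ 2 * log t + 1) =o[atTop] id :=
    (isLittleO_log_id_atTop.const_mul_left 2).add (isLittleO_const_id_atTop 1)
  refine (IsBigO.of_bound 1 ?_).trans_isLittleO hbound
  filter_upwards [eventually_ge_atTop 2] with t ht
  rw [one_mul, norm_eq_abs, norm_of_nonneg (by linarith [log_nonneg (by linarith : (1:ℝ) ≤ t)])]
  exact abs_log_Gamma_sub_le ht

lemma tendsto_log_Gamma_add_log_Gamma_sub_div {ι : Type*} {l : Filter ι} {a b c : ι → ℝ}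
    {α β : ℝ} (ha : Tendsto a l atTop) (hb : Tendsto b l atTop) (hc : ∀ᶠ i in l, c i ≠ 0)
    (haα : Tendsto (fun i ↦ a i / c i) l (𝓝 α)) (hbβ : Tendsto (fun i ↦ b i / c i) l (𝓝 β)) :
    Tendsto (fun i ↦ (log (Gamma (a i)) + log (Gamma (b i)) - log (Gamma (a i + b i))) / c i) l
      (𝓝 (α * log α + β * log β - (α + β) * log (α + β))) := by
  set δ : ℝ → ℝ := fun t ↦ log (Gamma t) - (t * log t - t)
  have herr {x : ι → ℝ} {γ : ℝ} (hx : Tendsto x l atTop)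
      (hxγ : Tendsto (fun i ↦ x i / c i) l (𝓝 γ)) :
      Tendsto (fun i ↦ δ (x i) / c i) l (𝓝 0) :=
    ((isLittleO_log_Gamma_sub.comp_tendsto hx).trans_isBigO
      (isBigO_of_div_tendsto_nhds (hc.mono fun i hi h ↦ absurd h hi) γ hxγ)).tendsto_div_nhds_zero
  have habγ : Tendsto (fun i ↦ (a i + b i) / c i) l (𝓝 (α + β)) := by
    simpa only [add_div] using haα.add hbβ
  have hmain := ((continuous_mul_log.tendsto α).comp haα).add
    ((continuous_mul_log.tendsto β).comp hbβ) |>.sub ((continuous_mul_log.tendsto _).comp habγ)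
  have hsum := hmain.add
    ((herr ha haα).add (herr hb hbβ) |>.sub (herr (ha.atTop_add_atTop hb) habγ))
  rw [add_zero, sub_zero, add_zero] at hsum
  refine hsum.congr' ?_
  filter_upwards [ha.eventually_gt_atTop 0, hb.eventually_gt_atTop 0, hc] with i hai hbi hci
  simp only [Function.comp_apply, δ]
  rw [log_div hai.ne' hci, log_div hbi.ne' hci, log_div (by positivity) hci]
  field_simp
  ring

lemma tendsto_log_Gamma_div_add_log_Gamma_sub_div_self {p : ℝ} (hp : 1 < p) :
    Tendsto (fun x ↦ (log (Gamma (x / p)) + log (Gamma (x + 1 - x / p)) - log (Gamma (x + 1))) / x)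
      atTop (𝓝 (-binEntropy p⁻¹)) := by
  have hp0 : 0 < p := by linarith
  have hq : 0 < 1 - p⁻¹ := by rw [sub_pos]; exact inv_lt_one_of_one_lt₀ hp
  have hb : Tendsto (fun x : ℝ ↦ x + 1 - x / p) atTop atTop := by
    refine tendsto_atTop_add_const_right _ 1 (tendsto_id.atTop_mul_const hq) |>.congr fun x ↦ ?_
    simp only [id]; ring
  have hbx : Tendsto (fun x : ℝ ↦ (x + 1 - x / p) / x) atTop (𝓝 (1 - p⁻¹)) := by
    rw [← add_zero (1 - p⁻¹)]
    refine (tendsto_inv_atTop_zero.const_add (1 - p⁻¹)).congr' ?_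
    filter_upwards [eventually_ne_atTop 0] with x hx
    field_simp
    ring
  have hax : Tendsto (fun x : ℝ ↦ x / p / x) atTop (𝓝 p⁻¹) :=
    tendsto_const_nhds.congr' <| (eventually_ne_atTop 0).mono fun x hx ↦ by field_simp
  have hbeta := tendsto_log_Gamma_add_log_Gamma_sub_div (tendsto_id.atTop_div_const hp0) hb
    (eventually_ne_atTop 0) hax hbx
  rw [add_sub_cancel, log_one, mul_zero, sub_zero] at hbeta
  convert hbeta using 2 with x
  · simp only [id, add_sub_cancel]
  · simp only [binEntropy, log_inv]
    ring

noncomputable def sobolevConst (N p : ℝ) : ℝ :=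
  π ^ (p / 2) * N * ((N - p) / (p - 1)) ^ (p - 1) *
    ((Gamma (N / p) * Gamma (N + 1 - N / p)) / (Gamma N * Gamma (1 + N / 2))) ^ (p / N)

/-- `ω_{k-1}`, the area of the unit sphere in `ℝᵏ`. -/
noncomputable def sphereArea (k : ℝ) : ℝ := k * π ^ (k / 2) / Gamma (1 + k / 2)

lemma sphereArea_pos {k : ℝ} (hk : 0 < k) : 0 < sphereArea k := by
  have := Gamma_pos_of_pos (by positivity : 0 < 1 + k / 2)
  unfold sphereArea
  positivity

lemma sobolevConst_mul_eq_exp {k p x : ℝ} (hp : 1 < p) (hpk : p < k) (hpx : p < x) :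
    sobolevConst x p * (sphereArea k / sphereArea x) ^ (p / x) * ((k - p) / (x - p)) ^ (p - p / x) =
      exp (p * ((log (Gamma (x / p)) + log (Gamma (x + 1 - x / p)) - log (Gamma (x + 1))) / x)
        + p * ((log (sphereArea k) - log (k - p)) / x) + p * (log (x - p) / x) - log (1 - p / x)
        + (p * log (k - p) - (p - 1) * log (p - 1))) := by
  have hx : 0 < x := by linarith
  have hxp : 0 < x - p := by linarith
  have hkp : 0 < k - p := by linarith
  have hp1 : 0 < p - 1 := by linarith
  have hx1 : 0 < x + 1 - x / p := by linarith [div_lt_self hx hp]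
  have hΓ₁ := Gamma_pos_of_pos (by positivity : 0 < x / p)
  have hΓ₂ := Gamma_pos_of_pos hx1
  have hΓ₃ := Gamma_pos_of_pos hx
  have hΓ₄ := Gamma_pos_of_pos (by positivity : 0 < 1 + x / 2)
  have hAk := sphereArea_pos (by linarith : 0 < k)
  have hAx := sphereArea_pos hx
  rw [Gamma_add_one hx.ne', show 1 - p / x = (x - p) / x by field_simp,
    ← exp_log (show 0 < sobolevConst x p * _ * _ by unfold sobolevConst; positivity)]
  congr 1
  rw [sobolevConst, show sphereArea x = x * π ^ (x / 2) / Gamma (1 + x / 2) from rfl]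
  simp (disch := positivity) only [log_mul, log_div, log_rpow]
  field_simp
  ring

theorem tendsto_sobolevConst_mul_sphereArea_div {k p : ℝ} (hp : 1 < p) (hpk : p < k) :
    Tendsto (fun x ↦ sobolevConst x p * (sphereArea k / sphereArea x) ^ (p / x) *
      ((k - p) / (x - p)) ^ (p - p / x)) atTop (𝓝 (((k - p) / p) ^ p)) := by
  have hp0 : 0 < p := by linarith
  have hp1 : 0 < p - 1 := by linarith
  have hkp : 0 < k - p := by linarith
  have hlog : Tendsto (fun x ↦ log (x - p) / x) atTop (𝓝 0) := by
    refine (tendsto_pow_log_div_mul_add_atTop 1 p 1 one_ne_zero).comp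
      (tendsto_atTop_add_const_right _ (-p) tendsto_id) |>.congr fun x ↦ ?_
    simp only [Function.comp_apply, id, pow_one]
    ring_nf
  have h1p : Tendsto (fun x ↦ log (1 - p / x)) atTop (𝓝 0) := by
    have h : Tendsto (fun x : ℝ ↦ 1 - p / x) atTop (𝓝 1) := by
      simpa using (tendsto_id.const_div_atTop p).const_sub 1
    simpa only [log_one] using h.log one_ne_zero
  have hlim := (((((tendsto_log_Gamma_div_add_log_Gamma_sub_div_self hp).const_mul p).add
    ((tendsto_id.const_div_atTop (log (sphereArea k) - log (k - p))).const_mul p)).add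
    (hlog.const_mul p)).sub h1p).add_const (p * log (k - p) - (p - 1) * log (p - 1))
  simp only [mul_zero, add_zero, sub_zero] at hlim
  have hval : p * -binEntropy p⁻¹ + (p * log (k - p) - (p - 1) * log (p - 1))
      = log ((k - p) / p) * p := by
    rw [binEntropy, show 1 - p⁻¹ = (p - 1) / p by field_simp, inv_div, log_div hkp.ne' hp0.ne',
      log_div hp0.ne' hp1.ne', inv_inv]
    field_simp
    ring
  rw [rpow_def_of_pos (div_pos hkp hp0), ← hval]
  refine ((continuous_exp.tendsto _).comp hlim).congr' ?_
  filter_upwards [eventually_gt_atTop p] with x hx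
  exact (sobolevConst_mul_eq_exp hp hpk hx).symm

theorem sobolev_to_hardy_constant_limit (m : ℕ) (p : ℝ) (hp : 1 < p) (hpm : p < m) :
    Tendsto
      (fun N : ℕ =>
        (π ^ (p / 2) * N * (((N : ℝ) - p) / (p - 1)) ^ (p - 1) *
            ((Real.Gamma ((N : ℝ) / p) * Real.Gamma ((N : ℝ) + 1 - (N : ℝ) / p)) /
                (Real.Gamma (N : ℝ) * Real.Gamma (1 + (N : ℝ) / 2))) ^ (p / (N : ℝ))) *
          ((((m : ℝ) * π ^ ((m : ℝ) / 2) / Real.Gamma (1 + (m : ℝ) / 2)) /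
              ((N : ℝ) * π ^ ((N : ℝ) / 2) / Real.Gamma (1 + (N : ℝ) / 2))) ^ (p / (N : ℝ))) *
          (((m : ℝ) - p) / ((N : ℝ) - p)) ^ (p - p / (N : ℝ)))
      atTop (nhds ((((m : ℝ) - p) / p) ^ p)) :=
  (tendsto_sobolevConst_mul_sphereArea_div hp hpm).comp tendsto_natCast_atTop_atTop
end

section
/- Let N ≥ 2, |Ω| < ∞, and suppose that for all q ∈ (N,∞) and all u ∈ W_0^{1,N}(Ω) the estimate ‖u‖_{L^q}^q ≤ C^q q^{((N-1)/N)q - 1} |Ω| ‖∇u‖_{L^N}^q holds with a constant C depending only on N. Then there exist α > 0 and C' > 0 depending only on N and C such that ∫_Ω exp( α (|u(x)|/‖∇u‖_{L^N})^{N/(N-1)} ) dx ≤ C' |Ω| for all nonzero u ∈ W_0^{1,N}(Ω). -/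
open MeasureTheory Real

private lemma tm_factorial_add_le (k j : ℕ) :
    Nat.factorial (k + j) ≤ Nat.factorial k * (k + j) ^ j := by
  induction j with
  | zero => simp
  | succ j ih =>
    calc Nat.factorial (k + (j+1)) = (k + j + 1) * Nat.factorial (k + j) := by
          rw [← Nat.add_assoc]; exact Nat.factorial_succ _
    _ ≤ (k + j + 1) * (Nat.factorial k * (k + j) ^ j) := Nat.mul_le_mul_left _ ih
    _ ≤ (k + j + 1) * (Nat.factorial k * (k + j + 1) ^ j) :=
          Nat.mul_le_mul_left _ (Nat.mul_le_mul_left _ (Nat.pow_le_pow_left (Nat.le_succ _) j))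
    _ = Nat.factorial k * (k + j + 1) ^ (j+1) := by ring
    _ = Nat.factorial k * (k + (j+1)) ^ (j+1) := by ring_nf

private lemma tm_pow_self_le (m : ℕ) :
    (m : ℝ) ^ m ≤ (Nat.factorial m : ℝ) * Real.exp 1 ^ m := by
  have h := Real.pow_div_factorial_le_exp (x := (m : ℝ)) (by positivity) m
  have h2 : Real.exp (m : ℝ) = Real.exp 1 ^ m := by
    rw [← Real.exp_nat_mul]; norm_num
  rw [div_le_iff₀ (by positivity : (0:ℝ) < (Nat.factorial m : ℝ))] at h
  rw [h2] at h; linarith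

private lemma tm_exp_series (y : ℝ) : Real.exp y = ∑' k : ℕ, y ^ k / Nat.factorial k := by
  rw [Real.exp_eq_exp_ℝ, NormedSpace.exp_eq_tsum_div]

private lemma tm_add_le_mul_two_pow (k N : ℕ) (hN : 1 ≤ N) : k + N ≤ N * 2 ^ k := by
  have h1 : k + 1 ≤ 2 ^ k := Nat.lt_two_pow_self (n := k)
  calc k + N ≤ N * (k + 1) := by nlinarith
  _ ≤ N * 2 ^ k := Nat.mul_le_mul_left _ h1

set_option maxHeartbeats 1000000 in
theorem trudinger_moser_from_Lq_bounds (N : ℕ) (hN : 2 ≤ N)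
    (Ω : Set (EuclideanSpace ℝ (Fin N))) (hΩmeas : MeasurableSet Ω)
    (hΩfin : volume Ω < ⊤) (C : ℝ) (hC : 0 < C)
    (hLq : ∀ q : ℝ, (N : ℝ) < q →
      ∀ u : EuclideanSpace ℝ (Fin N) → ℝ, ContDiff ℝ (⊤ : ℕ∞) u → HasCompactSupport u →
        tsupport u ⊆ Ω →
        ∫ x in Ω, |u x| ^ q
          ≤ C ^ q * q ^ ((((N : ℝ) - 1) / N) * q - 1) * (volume Ω).toReal *
            (∫ x in Ω, ‖fderiv ℝ u x‖ ^ (N : ℝ)) ^ (q / (N : ℝ))) :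
    ∃ α > (0 : ℝ), ∃ C' > (0 : ℝ),
      ∀ u : EuclideanSpace ℝ (Fin N) → ℝ, ContDiff ℝ (⊤ : ℕ∞) u → HasCompactSupport u →
        tsupport u ⊆ Ω → u ≠ 0 →
        ∫ x in Ω,
            Real.exp (α * (|u x| /
              (∫ y in Ω, ‖fderiv ℝ u y‖ ^ (N : ℝ)) ^ (1 / (N : ℝ)))
                ^ ((N : ℝ) / ((N : ℝ) - 1)))
          ≤ C' * (volume Ω).toReal := by
  have hN2 : (2:ℝ) ≤ (N:ℝ) := by exact_mod_cast hN
  have hN1 : (0:ℝ) < (N:ℝ) - 1 := by linarith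
  have hNpos : (0:ℝ) < (N:ℝ) := by linarith
  set V : ℝ := (volume Ω).toReal with hV
  have hV0 : 0 ≤ V := ENNReal.toReal_nonneg
  set p : ℝ := (N:ℝ) / ((N:ℝ) - 1) with hp
  have hp1 : 1 < p := by rw [hp, lt_div_iff₀ hN1]; linarith
  have hp0 : 0 < p := by linarith
  set e1 : ℝ := Real.exp 1 with he1def
  have he1 : 0 < e1 := Real.exp_pos 1
  have hCp : 0 < C ^ p := Real.rpow_pos_of_pos hC p
  set A : ℝ := C ^ p * p * e1 with hA
  have hApos : 0 < A := by rw [hA]; positivity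
  set α : ℝ := (2 * A * 2 ^ N)⁻¹ with hαdef
  have hαpos : 0 < α := inv_pos.mpr (by positivity)
  have hαval : α * (A * 2 ^ N) = 1/2 := by
    rw [hαdef]
    have h2N : ((2:ℝ) ^ N) ≠ 0 := by positivity
    field_simp
  set D : ℕ → ℝ := fun k =>
    1 + C ^ (p * ((k + N : ℕ):ℝ)) * (p * ((k + N : ℕ):ℝ)) ^ (k + N - 1) with hDdef
  set E : ℕ → ℝ := fun k => α ^ k / (Nat.factorial k : ℝ) * D k with hEdef
  have hD1 : ∀ k, 1 ≤ D k := by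
    intro k
    have hm : (0:ℝ) < ((k + N : ℕ):ℝ) := by
      have : 0 < k + N := by omega
      exact_mod_cast this
    have : 0 < C ^ (p * ((k + N : ℕ):ℝ)) * (p * ((k + N : ℕ):ℝ)) ^ (k + N - 1) := by
      apply mul_pos (Real.rpow_pos_of_pos hC _)
      exact pow_pos (mul_pos hp0 hm) _
    simp only [hDdef]
    linarith
  have hE_pos : ∀ k, 0 < E k := by
    intro k
    simp only [hEdef]
    apply mul_pos
    · apply div_pos (pow_pos hαpos k)
      exact_mod_cast Nat.factorial_pos k
    · linarith [hD1 k]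
  -- summability of the tail terms
  have hf_le : ∀ k : ℕ, α ^ k / (Nat.factorial k : ℝ) *
      (C ^ (p * ((k + N : ℕ):ℝ)) * (p * ((k + N : ℕ):ℝ)) ^ (k + N - 1))
      ≤ A ^ N * (N:ℝ) ^ N * (1/2 : ℝ) ^ k := by
    intro k
    have hkf : (0:ℝ) < (Nat.factorial k : ℝ) := by exact_mod_cast Nat.factorial_pos k
    have hmr0 : (0:ℝ) ≤ ((k + N : ℕ):ℝ) := Nat.cast_nonneg _
    have hmr2 : (2:ℝ) ≤ ((k + N : ℕ):ℝ) := by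
      have : 2 ≤ k + N := by omega
      exact_mod_cast this
    have hq1 : (1:ℝ) ≤ p * ((k + N : ℕ):ℝ) := by nlinarith
    have s1 : (p * ((k+N:ℕ):ℝ)) ^ (k + N - 1) ≤ (p * ((k+N:ℕ):ℝ)) ^ (k + N) :=
      pow_le_pow_right₀ hq1 (Nat.sub_le _ _)
    have s3 : ((k+N:ℕ):ℝ) ^ (k+N) ≤ (Nat.factorial (k+N) : ℝ) * e1 ^ (k+N) := by
      have := tm_pow_self_le (k+N)
      rw [← he1def] at this
      exact_mod_cast this
    have s4 : (Nat.factorial (k+N) : ℝ) ≤ (Nat.factorial k : ℝ) * ((k+N:ℕ):ℝ) ^ N := by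
      exact_mod_cast tm_factorial_add_le k N
    have s5 : ((k+N:ℕ):ℝ) ^ N ≤ (N:ℝ) ^ N * ((2:ℝ) ^ N) ^ k := by
      have h5 : ((k+N:ℕ):ℝ) ≤ (N:ℝ) * 2 ^ k := by
        exact_mod_cast tm_add_le_mul_two_pow k N (by omega)
      calc ((k+N:ℕ):ℝ) ^ N ≤ ((N:ℝ) * 2 ^ k) ^ N := pow_le_pow_left₀ hmr0 h5 N
        _ = (N:ℝ)^N * ((2:ℝ)^k)^N := mul_pow _ _ _
        _ = (N:ℝ)^N * ((2:ℝ)^N)^k := by rw [← pow_mul, ← pow_mul, Nat.mul_comm]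
    have s7 : C ^ (p * ((k+N:ℕ):ℝ)) = (C ^ p) ^ (k+N) := by
      rw [Real.rpow_mul hC.le, Real.rpow_natCast]
    have hmain : (p * ((k+N:ℕ):ℝ)) ^ (k+N-1)
        ≤ p ^ (k+N) * (e1 ^ (k+N) * ((Nat.factorial k : ℝ) * ((N:ℝ)^N * ((2:ℝ)^N)^k))) := by
      calc (p * ((k+N:ℕ):ℝ)) ^ (k+N-1) ≤ (p * ((k+N:ℕ):ℝ)) ^ (k+N) := s1
        _ = p ^ (k+N) * ((k+N:ℕ):ℝ) ^ (k+N) := mul_pow _ _ _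
        _ ≤ p ^ (k+N) * ((Nat.factorial (k+N):ℝ) * e1 ^ (k+N)) := by
            exact mul_le_mul_of_nonneg_left s3 (pow_nonneg hp0.le _)
        _ ≤ p ^ (k+N) * (((Nat.factorial k : ℝ) * ((N:ℝ)^N * ((2:ℝ)^N)^k)) * e1 ^ (k+N)) := by
            apply mul_le_mul_of_nonneg_left _ (pow_nonneg hp0.le _)
            apply mul_le_mul_of_nonneg_right _ (pow_nonneg he1.le _)
            calc (Nat.factorial (k+N):ℝ) ≤ (Nat.factorial k:ℝ) * ((k+N:ℕ):ℝ)^N := s4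
              _ ≤ (Nat.factorial k:ℝ) * ((N:ℝ)^N * ((2:ℝ)^N)^k) :=
                  mul_le_mul_of_nonneg_left s5 hkf.le
        _ = p ^ (k+N) * (e1 ^ (k+N) * ((Nat.factorial k : ℝ) * ((N:ℝ)^N * ((2:ℝ)^N)^k))) := by
            ring
    have hkf' : (Nat.factorial k : ℝ) ≠ 0 := hkf.ne'
    calc α ^ k / (Nat.factorial k:ℝ) *
        (C ^ (p * ((k+N:ℕ):ℝ)) * (p * ((k+N:ℕ):ℝ)) ^ (k+N-1))
        ≤ α ^ k / (Nat.factorial k:ℝ) * ((C^p)^(k+N) *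
            (p ^ (k+N) * (e1 ^ (k+N) * ((Nat.factorial k : ℝ) * ((N:ℝ)^N * ((2:ℝ)^N)^k))))) := by
          rw [s7]
          apply mul_le_mul_of_nonneg_left _ (div_nonneg (pow_nonneg hαpos.le k) hkf.le)
          exact mul_le_mul_of_nonneg_left hmain (pow_pos hCp _).le
      _ = α ^ k * (A ^ (k+N) * ((N:ℝ)^N * ((2:ℝ)^N)^k)) := by
          rw [hA, mul_pow, mul_pow]
          field_simp
      _ = A ^ N * (N:ℝ)^N * ((α * (A * 2^N)) ^ k) := by
          rw [pow_add, mul_pow, mul_pow]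
          ring
      _ = A ^ N * (N:ℝ)^N * (1/2:ℝ) ^ k := by rw [hαval]
  have hSgeo : Summable (fun k : ℕ => A ^ N * (N:ℝ)^N * (1/2:ℝ)^k) :=
    (summable_geometric_of_lt_one (by norm_num) (by norm_num)).mul_left _
  have hSf : Summable (fun k : ℕ => α ^ k / (Nat.factorial k : ℝ) *
      (C ^ (p * ((k + N : ℕ):ℝ)) * (p * ((k + N : ℕ):ℝ)) ^ (k + N - 1))) := by
    apply Summable.of_nonneg_of_le _ hf_le hSgeo
    intro k
    apply mul_nonneg (div_nonneg (pow_nonneg hαpos.le _) (Nat.cast_nonneg _))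
    exact mul_nonneg (Real.rpow_nonneg hC.le _)
      (pow_nonneg (mul_nonneg hp0.le (Nat.cast_nonneg _)) _)
  have hSe : Summable E := by
    have hEeq : E = fun k : ℕ => α ^ k / (Nat.factorial k:ℝ) +
        α ^ k / (Nat.factorial k:ℝ) *
          (C ^ (p * ((k + N : ℕ):ℝ)) * (p * ((k + N : ℕ):ℝ)) ^ (k + N - 1)) := by
      funext k
      simp only [hEdef, hDdef]
      ring
    rw [hEeq]
    exact (Real.summable_pow_div_factorial α).add hSf
  set C' : ℝ := ∑' k, E k with hC'def
  have hC'1 : 1 ≤ C' := by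
    have he0 : (1:ℝ) ≤ E 0 := by
      simpa [hEdef] using hD1 0
    exact le_trans he0 (Summable.le_tsum hSe 0 fun j _ => (hE_pos j).le)
  refine ⟨α, hαpos, C', lt_of_lt_of_le one_pos hC'1, ?_⟩
  intro u hu1 hu2 hu3 _hu4
  set I : ℝ := ∫ x in Ω, ‖fderiv ℝ u x‖ ^ (N:ℝ) with hIdef
  have hI0 : 0 ≤ I := by
    rw [hIdef]
    exact integral_nonneg fun x => Real.rpow_nonneg (norm_nonneg _) _
  rcases hI0.eq_or_lt with hIz | hIpos
  · -- degenerate case: the gradient integral vanishes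
    have hG : I ^ (1/(N:ℝ)) = 0 := by
      rw [← hIz]
      exact Real.zero_rpow (by positivity : (0:ℝ) < 1/(N:ℝ)).ne'
    simp only [hG, div_zero, Real.zero_rpow hp0.ne', mul_zero,
      Real.exp_zero]
    rw [setIntegral_const, smul_eq_mul, mul_one, measureReal_def, ← hV]
    exact le_mul_of_one_le_left hV0 hC'1
  · -- main case
    have hG : 0 < I ^ (1/(N:ℝ)) := Real.rpow_pos_of_pos hIpos _
    set t : EuclideanSpace ℝ (Fin N) → ℝ := fun x => |u x| / I ^ (1/(N:ℝ)) with htdef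
    have ht0 : ∀ x, 0 ≤ t x := fun x => div_nonneg (abs_nonneg _) hG.le
    have htc : Continuous t := (continuous_abs.comp hu1.continuous).div_const _
    have hrc : ∀ r : ℝ, 0 ≤ r → Continuous fun x => t x ^ r :=
      fun r hr => htc.rpow_const fun x => Or.inr hr
    have hint : ∀ r : ℝ, 0 ≤ r → IntegrableOn (fun x => t x ^ r) Ω volume := by
      intro r hr
      rcases hr.eq_or_lt with h0 | hpos
      · simp only [← h0, Real.rpow_zero]
        exact integrableOn_const hΩfin.ne
      · have hcs : HasCompactSupport fun x => t x ^ r := by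
          have heq : (fun x => t x ^ r) =
              (fun s : ℝ => (|s| / I ^ (1/(N:ℝ))) ^ r) ∘ u := rfl
          rw [heq]
          exact hu2.comp_left (by simp [Real.zero_rpow hpos.ne'])
        exact ((hrc r hr).integrable_of_hasCompactSupport hcs).integrableOn
    have hB : ∀ q : ℝ, (N:ℝ) < q →
        ∫ x in Ω, t x ^ q ≤ C ^ q * q ^ ((((N:ℝ)-1)/(N:ℝ)) * q - 1) * V := by
      intro q hq
      have H := hLq q hq u hu1 hu2 hu3
      have hrw : (fun x => t x ^ q) = fun x => |u x| ^ q / I ^ (q / (N:ℝ)) := by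
        funext x
        show (|u x| / I ^ (1/(N:ℝ))) ^ q = _
        rw [Real.div_rpow (abs_nonneg _) (Real.rpow_nonneg hI0 _), ← Real.rpow_mul hI0]
        rw [one_div, inv_mul_eq_div]
      rw [show (∫ x in Ω, t x ^ q) = ∫ x in Ω, |u x| ^ q / I ^ (q / (N:ℝ)) from by rw [hrw]]
      rw [integral_div, div_le_iff₀ (Real.rpow_pos_of_pos hIpos _)]
      exact H
    have hptA : ∀ (x : EuclideanSpace ℝ (Fin N)) (k : ℕ), t x ^ (p * (k:ℝ)) ≤ 1 + t x ^ (p * ((k+N:ℕ):ℝ)) := by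
      intro x k
      have hnn : 0 ≤ t x ^ (p * ((k+N:ℕ):ℝ)) := Real.rpow_nonneg (ht0 x) _
      rcases le_total (t x) 1 with h | h
      · have h1 : t x ^ (p * (k:ℝ)) ≤ 1 :=
          Real.rpow_le_one (ht0 x) h (mul_nonneg hp0.le (Nat.cast_nonneg _))
        linarith
      · have h1 : t x ^ (p * (k:ℝ)) ≤ t x ^ (p * ((k+N:ℕ):ℝ)) := by
          apply Real.rpow_le_rpow_of_exponent_le h
          have hc : (k:ℝ) ≤ ((k+N:ℕ):ℝ) := by exact_mod_cast Nat.le_add_right k N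
          nlinarith
        linarith
    have hR : ∀ k : ℕ, ∫ x in Ω, t x ^ (p * (k:ℝ)) ≤ D k * V := by
      intro k
      have hmN : (N:ℝ) ≤ ((k+N:ℕ):ℝ) := by exact_mod_cast Nat.le_add_left N k
      have hq : (N:ℝ) < p * ((k+N:ℕ):ℝ) := by nlinarith
      have key := hB (p * ((k+N:ℕ):ℝ)) hq
      have hexp : (((N:ℝ)-1)/(N:ℝ)) * (p * ((k+N:ℕ):ℝ)) - 1 = ((k + N - 1 : ℕ):ℝ) := by
        have h1 : 1 ≤ k + N := by omega
        rw [hp, Nat.cast_sub h1]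
        push_cast
        field_simp
      rw [hexp, Real.rpow_natCast] at key
      calc ∫ x in Ω, t x ^ (p * (k:ℝ))
          ≤ ∫ x in Ω, (1 + t x ^ (p * ((k+N:ℕ):ℝ))) := by
            apply integral_mono (hint _ (mul_nonneg hp0.le (Nat.cast_nonneg _)))
              ((integrableOn_const hΩfin.ne).add
                (hint _ (mul_nonneg hp0.le (Nat.cast_nonneg _))))
            intro x
            exact hptA x k
        _ = V + ∫ x in Ω, t x ^ (p * ((k+N:ℕ):ℝ)) := by
            rw [integral_add (show Integrable (fun _ => (1:ℝ)) (volume.restrict Ω) from integrableOn_const hΩfin.ne)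
              (hint _ (mul_nonneg hp0.le (Nat.cast_nonneg _)))]
            rw [setIntegral_const, smul_eq_mul, mul_one, measureReal_def, ← hV]
        _ ≤ V + C ^ (p * ((k+N:ℕ):ℝ)) * (p * ((k+N:ℕ):ℝ)) ^ (k+N-1) * V := by
            linarith [key]
        _ = D k * V := by simp only [hDdef]; ring
    -- now the exponential series argument
    show (∫ x in Ω, Real.exp (α * t x ^ p)) ≤ C' * V
    have hmeasexp : AEStronglyMeasurable (fun x => Real.exp (α * t x ^ p))
        (volume.restrict Ω) :=
      (Real.continuous_exp.comp (continuous_const.mul (hrc p hp0.le))).aestronglyMeasurable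
    have hnn : 0 ≤ᵐ[volume.restrict Ω] fun x => Real.exp (α * t x ^ p) :=
      ae_of_all _ fun x => (Real.exp_pos _).le
    rw [integral_eq_lintegral_of_nonneg_ae hnn hmeasexp]
    refine ENNReal.toReal_le_of_le_ofReal
      (mul_nonneg (le_trans zero_le_one hC'1) hV0) ?_
    have hser : ∀ x, ENNReal.ofReal (Real.exp (α * t x ^ p)) =
        ∑' k : ℕ, ENNReal.ofReal ((α^k / (Nat.factorial k : ℝ)) * t x ^ (p * (k:ℝ))) := by
      intro x
      have hy : 0 ≤ α * t x ^ p := mul_nonneg hαpos.le (Real.rpow_nonneg (ht0 x) p)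
      rw [tm_exp_series (α * t x ^ p)]
      rw [ENNReal.ofReal_tsum_of_nonneg
        (fun k => div_nonneg (pow_nonneg hy k) (Nat.cast_nonneg _))
        (Real.summable_pow_div_factorial _)]
      refine tsum_congr fun k => ?_
      congr 1
      rw [mul_pow, ← Real.rpow_natCast (t x ^ p) k, ← Real.rpow_mul (ht0 x)]
      ring
    calc ∫⁻ x in Ω, ENNReal.ofReal (Real.exp (α * t x ^ p))
        = ∑' k : ℕ, ∫⁻ x in Ω,
            ENNReal.ofReal ((α^k / (Nat.factorial k : ℝ)) * t x ^ (p * (k:ℝ))) := by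
          simp_rw [hser]
          exact lintegral_tsum fun k =>
            ((continuous_const.mul (hrc _ (mul_nonneg hp0.le
              (Nat.cast_nonneg _)))).measurable.ennreal_ofReal).aemeasurable
      _ ≤ ∑' k : ℕ, ENNReal.ofReal (E k * V) := by
          refine ENNReal.tsum_le_tsum fun k => ?_
          have hc0 : 0 ≤ α^k / (Nat.factorial k : ℝ) :=
            div_nonneg (pow_nonneg hαpos.le _) (Nat.cast_nonneg _)
          have h1 : ∀ x, ENNReal.ofReal ((α^k / (Nat.factorial k : ℝ)) * t x ^ (p * (k:ℝ)))
              = ENNReal.ofReal (α^k / (Nat.factorial k : ℝ)) *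
                ENNReal.ofReal (t x ^ (p * (k:ℝ))) :=
            fun x => ENNReal.ofReal_mul hc0
          simp_rw [h1]
          rw [lintegral_const_mul' _ _ ENNReal.ofReal_ne_top]
          rw [← ofReal_integral_eq_lintegral_ofReal
            (hint _ (mul_nonneg hp0.le (Nat.cast_nonneg _)))
            (ae_of_all _ fun x => Real.rpow_nonneg (ht0 x) _)]
          rw [← ENNReal.ofReal_mul hc0]
          apply ENNReal.ofReal_le_ofReal
          calc α^k / (Nat.factorial k : ℝ) * ∫ x in Ω, t x ^ (p*(k:ℝ))
              ≤ α^k / (Nat.factorial k : ℝ) * (D k * V) :=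
                mul_le_mul_of_nonneg_left (hR k) hc0
            _ = E k * V := by simp only [hEdef]; ring
      _ = ENNReal.ofReal (C' * V) := by
          rw [← ENNReal.ofReal_tsum_of_nonneg
            (fun k => mul_nonneg (hE_pos k).le hV0) (hSe.mul_right V)]
          rw [tsum_mul_right, ← hC'def]
end
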